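/- arXiv:1703.05855 — 9 statements merged into one kernel-verified Lean document; each statement's English description precedes it below -/
import Mathlib

section
/- Let φ : ℝ² → ℝ be twice continuously differentiable. For λ ∈ ℂ, λ ≠ 0, define the 3×3 matrix-valued functions U(ξ,η,λ) = −2(∂φ/∂ξ)(ξ,η)·H0 + iλ·𝒥 and W(ξ,η,λ) = i λ^{−1} V1(ξ,η), where V1(ξ,η) is the matrix with entries V1(1,3) = e^{−4φ(ξ,η)}, V1(2,1) = V1(3,2) = e^{2φ(ξ,η)}, and all other entries zero. Then the zero-curvature (compatibility) condition ∂U/∂η − ∂W/∂ξ + [U, W] = 0 holds for all (ξ,η) ∈ ℝ² and all λ ≠ 0 if and only if φ satisfies the Tzitzeica equation T2: 2 ∂²φ/∂ξ∂η = −(e^{2φ} − e^{−4φ}). (In fact, the λ-dependent terms cancel identically and the condition reduces pointwise to −2(∂²φ/∂ξ∂η)·H0 = (e^{2φ} − e^{−4φ})·H0.) -/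
/-! Write `V₁ = a E₁₃ + b (E₂₁ + E₃₂)` with `a = e^{-4φ}`, `b = e^{2φ}`. Since `∂_ξ a = -4 φ_ξ a`,
`∂_ξ b = 2 φ_ξ b`, and `ad H₀` multiplies `E₁₃` by `2` and `E₂₁`, `E₃₂` by `-1`, we get
`∂_ξ V₁ = -2 φ_ξ [H₀, V₁]`, which cancels the `λ⁻¹`-part of `[U, W]`. As `[𝒥, V₁] = (b - a) H₀` and
`iλ · iλ⁻¹ = -1`, the curvature is `-(2 φ_{ξη} + b - a) H₀`.

The Lax pair produces `∂_η (∂_ξ φ)` while T2 is written with `∂_ξ (∂_η φ)`: Schwarz's theorem is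
where `C²` is used. -/

open Matrix

/-- `H₀ = diag(1, 0, -1)`. -/
def H0 : Matrix (Fin 3) (Fin 3) ℂ := !![1, 0, 0; 0, 0, 0; 0, 0, -1]

/-- The cyclic matrix `𝒥` with `𝒥(1,2) = 𝒥(2,3) = 𝒥(3,1) = 1`. -/
def Jmat : Matrix (Fin 3) (Fin 3) ℂ := !![0, 1, 0; 0, 0, 1; 1, 0, 0]

/-- `V₁(ξ,η)`: the matrix with `V₁(1,3) = e^{-4φ}`, `V₁(2,1) = V₁(3,2) = e^{2φ}`. -/
noncomputable def V1 (φ : ℝ → ℝ → ℝ) (ξ η : ℝ) : Matrix (Fin 3) (Fin 3) ℂ :=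
  !![0, 0, Real.exp (-4 * φ ξ η);
     Real.exp (2 * φ ξ η), 0, 0;
     0, Real.exp (2 * φ ξ η), 0]

/-- `U(ξ,η,λ) = -2 φ_ξ · H₀ + iλ·𝒥`. -/
noncomputable def Umat (φ : ℝ → ℝ → ℝ) (ξ η : ℝ) (lam : ℂ) : Matrix (Fin 3) (Fin 3) ℂ :=
  ((-2 * deriv (fun x => φ x η) ξ : ℝ) : ℂ) • H0 + (Complex.I * lam) • Jmat

/-- `W(ξ,η,λ) = i λ⁻¹ V₁(ξ,η)`. -/
noncomputable def Wmat (φ : ℝ → ℝ → ℝ) (ξ η : ℝ) (lam : ℂ) : Matrix (Fin 3) (Fin 3) ℂ :=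
  (Complex.I * lam⁻¹) • V1 φ ξ η

open Function

section MixedPartials

variable {E : Type*} [NormedAddCommGroup E] [NormedSpace ℝ E] {f : ℝ → ℝ → E}

lemma HasFDerivAt.hasDerivAt_uncurry_left {L : ℝ × ℝ →L[ℝ] E} {x y : ℝ}
    (hf : HasFDerivAt (uncurry f) L (x, y)) : HasDerivAt (fun x' => f x' y) (L (1, 0)) x :=
  HasFDerivAt.comp_hasDerivAt (l := uncurry f) x hf
    ((hasDerivAt_id x).prodMk (hasDerivAt_const x y))

lemma HasFDerivAt.hasDerivAt_uncurry_right {L : ℝ × ℝ →L[ℝ] E} {x y : ℝ}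
    (hf : HasFDerivAt (uncurry f) L (x, y)) : HasDerivAt (fun y' => f x y') (L (0, 1)) y :=
  HasFDerivAt.comp_hasDerivAt (l := uncurry f) y hf
    ((hasDerivAt_const y x).prodMk (hasDerivAt_id y))

lemma hasDerivAt_deriv_comm_of_contDiff (hf : ContDiff ℝ 2 (uncurry f)) (x y : ℝ) :
    HasDerivAt (fun y' => deriv (fun x' => f x' y') x)
      (deriv (fun x' => deriv (fun y' => f x' y') y) x) y := by
  set F := uncurry f
  have hF : ∀ p, HasFDerivAt F (fderiv ℝ F p) p := fun p =>
    (hf.differentiable (by norm_num) p).hasFDerivAt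
  have hF' : ∀ p, HasFDerivAt (fderiv ℝ F) (fderiv ℝ (fderiv ℝ F) p) p := fun p =>
    ((hf.fderiv_right (m := 1) le_rfl).differentiable one_ne_zero p).hasFDerivAt
  have hFv : ∀ v p, HasFDerivAt (fun q => fderiv ℝ F q v) ((fderiv ℝ (fderiv ℝ F) p).flip v) p :=
    fun v p => by simpa using (hF' p).clm_apply (hasFDerivAt_const v p)
  have hleft : ∀ x' y', deriv (fun x'' => f x'' y') x' = fderiv ℝ F (x', y') (1, 0) :=
    fun x' y' => (hF (x', y')).hasDerivAt_uncurry_left.deriv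
  have hright : ∀ x' y', deriv (fun y'' => f x' y'') y' = fderiv ℝ F (x', y') (0, 1) :=
    fun x' y' => (hF (x', y')).hasDerivAt_uncurry_right.deriv
  simp only [hleft, hright]
  rw [((hFv (0, 1) (x, y)).hasDerivAt_uncurry_left
    (f := fun x' y' => fderiv ℝ F (x', y') (0, 1))).deriv]
  have hsym := (hf.contDiffAt (x := (x, y))).isSymmSndFDerivAt (by simp)
  simpa [hsym (1, 0) (0, 1)] using
    (hFv (1, 0) (x, y)).hasDerivAt_uncurry_right (f := fun x' y' => fderiv ℝ F (x', y') (1, 0))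

end MixedPartials

lemma Matrix.of_deriv_apply_eq {m n F : Type*} [NormedAddCommGroup F] [NormedSpace ℝ F]
    {A : ℝ → Matrix m n F} {A' : Matrix m n F} {t : ℝ}
    (h : ∀ i j, HasDerivAt (fun s => A s i j) (A' i j) t) :
    Matrix.of (fun i j => deriv (fun s => A s i j) t) = A' := by
  ext i j; exact (h i j).deriv

attribute [local instance] LieRing.ofAssociativeRing

def Vmat (a b : ℂ) : Matrix (Fin 3) (Fin 3) ℂ := !![0, 0, a; b, 0, 0; 0, b, 0]

lemma V1_eq_Vmat (φ : ℝ → ℝ → ℝ) (ξ η : ℝ) :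
    V1 φ ξ η = Vmat (Real.exp (-4 * φ ξ η)) (Real.exp (2 * φ ξ η)) := rfl

lemma lie_H0_Vmat (a b : ℂ) : ⁅H0, Vmat a b⁆ = Vmat (2 * a) (-b) := by
  rw [Ring.lie_def]
  ext i j; fin_cases i <;> fin_cases j <;> simp [H0, Vmat, two_mul]

lemma lie_Jmat_Vmat (a b : ℂ) : ⁅Jmat, Vmat a b⁆ = (b - a) • H0 := by
  rw [Ring.lie_def]
  ext i j; fin_cases i <;> fin_cases j <;> simp [H0, Jmat, Vmat]

lemma smul_Vmat (c a b : ℂ) : c • Vmat a b = Vmat (c * a) (c * b) := by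
  ext i j; fin_cases i <;> fin_cases j <;> simp [Vmat]

lemma hasDerivAt_Vmat_apply {a b : ℝ → ℂ} {a' b' : ℂ} {t : ℝ} (ha : HasDerivAt a a' t)
    (hb : HasDerivAt b b' t) (i j : Fin 3) :
    HasDerivAt (fun s => Vmat (a s) (b s) i j) (Vmat a' b' i j) t := by
  fin_cases i <;> fin_cases j <;> simp [Vmat, ha, hb, hasDerivAt_const]

section ZeroCurvature

variable {φ : ℝ → ℝ → ℝ} {ξ η : ℝ}

lemma hasDerivAt_V1_apply {d : ℝ} (hd : HasDerivAt (fun x => φ x η) d ξ) (i j : Fin 3) :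
    HasDerivAt (fun x => V1 φ x η i j) ((((-2 * d : ℝ) : ℂ) • ⁅H0, V1 φ ξ η⁆) i j) ξ := by
  have hexp (k : ℝ) : HasDerivAt (fun x => ((Real.exp (k * φ x η) : ℝ) : ℂ))
      ((Real.exp (k * φ ξ η) * (k * d) : ℝ) : ℂ) ξ :=
    ((hd.const_mul k).exp).ofReal_comp
  simp only [V1_eq_Vmat, lie_H0_Vmat, smul_Vmat]
  convert hasDerivAt_Vmat_apply (hexp (-4)) (hexp 2) i j using 3 <;> push_cast <;> ring

lemma hasDerivAt_Umat_apply {m : ℝ} (lam : ℂ)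
    (hm : HasDerivAt (fun y => deriv (fun x => φ x y) ξ) m η) (i j : Fin 3) :
    HasDerivAt (fun y => Umat φ ξ y lam i j) ((((-2 * m : ℝ) : ℂ) • H0) i j) η :=
  (((hm.const_mul (-2)).ofReal_comp).mul_const (H0 i j)).add_const ((Complex.I * lam) * Jmat i j)

lemma hasDerivAt_Wmat_apply {d : ℝ} (lam : ℂ) (hd : HasDerivAt (fun x => φ x η) d ξ)
    (i j : Fin 3) :
    HasDerivAt (fun x => Wmat φ x η lam i j)
      (((Complex.I * lam⁻¹) • ((-2 * d : ℝ) : ℂ) • ⁅H0, V1 φ ξ η⁆) i j) ξ :=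
  (hasDerivAt_V1_apply hd i j).const_mul _

lemma zeroCurvature_eq_smul_H0 (hφ : ContDiff ℝ 2 (uncurry φ)) (ξ η : ℝ) {lam : ℂ}
    (hlam : lam ≠ 0) :
    (Matrix.of fun i j => deriv (fun y => Umat φ ξ y lam i j) η) -
        (Matrix.of fun i j => deriv (fun x => Wmat φ x η lam i j) ξ) +
        (Umat φ ξ η lam * Wmat φ ξ η lam - Wmat φ ξ η lam * Umat φ ξ η lam) =
      ((-(2 * deriv (fun x => deriv (fun y => φ x y) η) ξ) -
          (Real.exp (2 * φ ξ η) - Real.exp (-4 * φ ξ η)) : ℝ) : ℂ) • H0 := by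
  have hd : HasDerivAt (fun x => φ x η) (deriv (fun x => φ x η) ξ) ξ :=
    ((hφ.differentiable (by norm_num) (ξ, η)).hasFDerivAt.hasDerivAt_uncurry_left
      (f := φ)).differentiableAt.hasDerivAt
  have hIlam : (Complex.I * lam) * (Complex.I * lam⁻¹) = -1 := by
    rw [mul_mul_mul_comm, Complex.I_mul_I, mul_inv_cancel₀ hlam, neg_one_mul]
  rw [of_deriv_apply_eq (hasDerivAt_Umat_apply lam (hasDerivAt_deriv_comm_of_contDiff hφ ξ η)),
    of_deriv_apply_eq (hasDerivAt_Wmat_apply lam hd),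
    ← Ring.lie_def, Umat, Wmat, add_lie, smul_lie, smul_lie, lie_smul, lie_smul,
    smul_smul (Complex.I * lam), hIlam, V1_eq_Vmat, lie_Jmat_Vmat]
  push_cast
  module

end ZeroCurvature

lemma H0_ne_zero : H0 ≠ 0 := fun h => by simpa [H0] using congrFun (congrFun h 0) 0

/-- The zero-curvature condition `∂U/∂η - ∂W/∂ξ + [U,W] = 0` holds for all
`(ξ,η)` and all `λ ≠ 0` iff `φ` satisfies the Tzitzeica equation T2:
`2 φ_{ξη} = -(e^{2φ} - e^{-4φ})`. -/
theorem stmt_4 (φ : ℝ → ℝ → ℝ) (hφ : ContDiff ℝ 2 (Function.uncurry φ)) :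
    (∀ (ξ η : ℝ) (lam : ℂ), lam ≠ 0 →
      (Matrix.of fun i j => deriv (fun y => Umat φ ξ y lam i j) η) -
        (Matrix.of fun i j => deriv (fun x => Wmat φ x η lam i j) ξ) +
        (Umat φ ξ η lam * Wmat φ ξ η lam - Wmat φ ξ η lam * Umat φ ξ η lam) = 0)
    ↔
    (∀ ξ η : ℝ,
      2 * deriv (fun x => deriv (fun y => φ x y) η) ξ =
        -(Real.exp (2 * φ ξ η) - Real.exp (-4 * φ ξ η))) := by
  constructor
  · intro hzero ξ η
    have h := hzero ξ η 1 one_ne_zero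
    rw [zeroCurvature_eq_smul_H0 hφ ξ η one_ne_zero, smul_eq_zero, or_iff_left H0_ne_zero,
      Complex.ofReal_eq_zero] at h
    linarith
  · intro hT ξ η lam hlam
    rw [zeroCurvature_eq_smul_H0 hφ ξ η hlam, hT ξ η, neg_neg, sub_self, Complex.ofReal_zero,
      zero_smul]
end

section
/- Let ρ ≠ 0, μ₀₂, c, α be real numbers, and define X(ξ,η) = (1/2)(ρξ − η/ρ) and Ω(ξ,η) = (√3/2)(ρξ + η/ρ). Define m₁(ξ,η) = μ₀₂e^{2X} + 2c·e^{−X}·cos(Ω − α + 2π/3), m₂(ξ,η) = μ₀₂e^{2X} + 2c·e^{−X}·cos(Ω − α), m₃(ξ,η) = μ₀₂e^{2X} + 2c·e^{−X}·cos(Ω − α − 2π/3). Then (m₁, m₂, m₃) satisfies the linear system ∂m₁/∂ξ = ρm₃, ∂m₂/∂ξ = ρm₁, ∂m₃/∂ξ = ρm₂, and ∂m₁/∂η = −ρ^{−1}m₂, ∂m₂/∂η = −ρ^{−1}m₃, ∂m₃/∂η = −ρ^{−1}m₁. -/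
/-!
Each component is `μ₀₂ e^{2X}` plus an oscillating term `2c e^{-X} cos(Ω - α + θ)`. Along `ξ` the
phase `(X, Ω)` moves with velocity `(ρ/2, √3ρ/2)`, so differentiating multiplies the first term by
`ρ` and turns `-½ cos w - (√3/2) sin w` into `cos (w + 2π/3)` in the second; along `η` the velocity
is `(-1/(2ρ), √3/(2ρ))` and the phase shifts by `-2π/3` instead. Since the three components differ
by phase shifts of `2π/3` (mod `2π`), each derivative is again a component.
-/

open Real

lemma Real.cos_two_pi_div_three : cos (2 * π / 3) = -(1 / 2) := by
  rw [show 2 * π / 3 = π - π / 3 by ring, cos_pi_sub, cos_pi_div_three]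

lemma Real.sin_two_pi_div_three : sin (2 * π / 3) = √3 / 2 := by
  rw [show 2 * π / 3 = π - π / 3 by ring, sin_pi_sub, sin_pi_div_three]

lemma Real.cos_add_two_pi_div_three (x : ℝ) :
    cos (x + 2 * π / 3) = -(1 / 2) * cos x - √3 / 2 * sin x := by
  rw [cos_add, cos_two_pi_div_three, sin_two_pi_div_three]
  ring

lemma Real.cos_sub_two_pi_div_three (x : ℝ) :
    cos (x - 2 * π / 3) = -(1 / 2) * cos x + √3 / 2 * sin x := by
  rw [cos_sub, cos_two_pi_div_three, sin_two_pi_div_three]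
  ring

lemma Real.cos_add_two_pi_div_three_add_two_pi_div_three (x : ℝ) :
    cos (x + 2 * π / 3 + 2 * π / 3) = cos (x - 2 * π / 3) := by
  rw [← cos_add_two_pi (x - 2 * π / 3)]
  ring_nf

lemma Real.cos_sub_two_pi_div_three_sub_two_pi_div_three (x : ℝ) :
    cos (x - 2 * π / 3 - 2 * π / 3) = cos (x + 2 * π / 3) := by
  rw [← cos_sub_two_pi (x + 2 * π / 3)]
  ring_nf

section ExpCos

variable {u v : ℝ → ℝ} {t : ℝ}

lemma hasDerivAt_exp_two_mul_add_exp_neg_mul_cos (A B : ℝ) {u' v' : ℝ}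
    (hu : HasDerivAt u u' t) (hv : HasDerivAt v v' t) :
    HasDerivAt (fun t => A * exp (2 * u t) + B * exp (-u t) * cos (v t))
      (2 * A * u' * exp (2 * u t) - B * u' * exp (-u t) * cos (v t)
        - B * v' * exp (-u t) * sin (v t)) t := by
  refine ((((hu.const_mul 2).exp).const_mul A).add
    ((((hu.neg).exp).const_mul B).mul hv.cos)).congr_deriv ?_
  simp only [Pi.neg_apply]
  ring

lemma hasDerivAt_exp_two_mul_add_exp_neg_mul_cos_of_forward (A B : ℝ) {s : ℝ}
    (hu : HasDerivAt u (s / 2) t) (hv : HasDerivAt v (√3 / 2 * s) t) :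
    HasDerivAt (fun t => A * exp (2 * u t) + B * exp (-u t) * cos (v t))
      (s * (A * exp (2 * u t) + B * exp (-u t) * cos (v t + 2 * π / 3))) t := by
  refine (hasDerivAt_exp_two_mul_add_exp_neg_mul_cos A B hu hv).congr_deriv ?_
  rw [cos_add_two_pi_div_three]
  ring

lemma hasDerivAt_exp_two_mul_add_exp_neg_mul_cos_of_backward (A B : ℝ) {s : ℝ}
    (hu : HasDerivAt u (-(s / 2)) t) (hv : HasDerivAt v (√3 / 2 * s) t) :
    HasDerivAt (fun t => A * exp (2 * u t) + B * exp (-u t) * cos (v t))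
      (-s * (A * exp (2 * u t) + B * exp (-u t) * cos (v t - 2 * π / 3))) t := by
  refine (hasDerivAt_exp_two_mul_add_exp_neg_mul_cos A B hu hv).congr_deriv ?_
  rw [cos_sub_two_pi_div_three]
  ring

end ExpCos

theorem stmt_10_general (ρ μ₀₂ c α : ℝ)
    (X Ω : ℝ → ℝ → ℝ)
    (hX : ∀ ξ η : ℝ, X ξ η = (1 / 2) * (ρ * ξ - η / ρ))
    (hΩ : ∀ ξ η : ℝ, Ω ξ η = (Real.sqrt 3 / 2) * (ρ * ξ + η / ρ))
    (m₁ m₂ m₃ : ℝ → ℝ → ℝ)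
    (hm₁ : ∀ ξ η : ℝ, m₁ ξ η =
      μ₀₂ * Real.exp (2 * X ξ η) +
        2 * c * Real.exp (-X ξ η) * Real.cos (Ω ξ η - α + 2 * Real.pi / 3))
    (hm₂ : ∀ ξ η : ℝ, m₂ ξ η =
      μ₀₂ * Real.exp (2 * X ξ η) +
        2 * c * Real.exp (-X ξ η) * Real.cos (Ω ξ η - α))
    (hm₃ : ∀ ξ η : ℝ, m₃ ξ η =
      μ₀₂ * Real.exp (2 * X ξ η) +
        2 * c * Real.exp (-X ξ η) * Real.cos (Ω ξ η - α - 2 * Real.pi / 3)) :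
    ∀ ξ η : ℝ,
      deriv (fun x => m₁ x η) ξ = ρ * m₃ ξ η ∧
      deriv (fun x => m₂ x η) ξ = ρ * m₁ ξ η ∧
      deriv (fun x => m₃ x η) ξ = ρ * m₂ ξ η ∧
      deriv (fun y => m₁ ξ y) η = -ρ⁻¹ * m₂ ξ η ∧
      deriv (fun y => m₂ ξ y) η = -ρ⁻¹ * m₃ ξ η ∧
      deriv (fun y => m₃ ξ y) η = -ρ⁻¹ * m₁ ξ η := by
  intro ξ η
  have hXξ : HasDerivAt (fun x => X x η) (ρ / 2) ξ := by
    simp only [hX]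
    exact (((hasDerivAt_id ξ).const_mul ρ |>.sub_const (η / ρ)).const_mul (1 / 2)).congr_deriv
      (by ring)
  have hΩξ : HasDerivAt (fun x => Ω x η - α) (√3 / 2 * ρ) ξ := by
    simp only [hΩ]
    exact ((((hasDerivAt_id ξ).const_mul ρ |>.add_const (η / ρ)).const_mul _).sub_const α).congr_deriv
      (by ring)
  have hXη : HasDerivAt (fun y => X ξ y) (-(ρ⁻¹ / 2)) η := by
    simp only [hX]
    exact (((hasDerivAt_id η).div_const ρ |>.const_sub (ρ * ξ)).const_mul (1 / 2)).congr_deriv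
      (by ring)
  have hΩη : HasDerivAt (fun y => Ω ξ y - α) (√3 / 2 * ρ⁻¹) η := by
    simp only [hΩ]
    exact ((((hasDerivAt_id η).div_const ρ |>.const_add (ρ * ξ)).const_mul _).sub_const α).congr_deriv
      (by ring)
  refine ⟨?_, ?_, ?_, ?_, ?_, ?_⟩ <;> simp only [hm₁, hm₂, hm₃]
  · rw [(hasDerivAt_exp_two_mul_add_exp_neg_mul_cos_of_forward μ₀₂ (2 * c) hXξ
      (hΩξ.add_const (2 * π / 3))).deriv, cos_add_two_pi_div_three_add_two_pi_div_three]
  · exact (hasDerivAt_exp_two_mul_add_exp_neg_mul_cos_of_forward μ₀₂ (2 * c) hXξ hΩξ).deriv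
  · rw [(hasDerivAt_exp_two_mul_add_exp_neg_mul_cos_of_forward μ₀₂ (2 * c) hXξ
      (hΩξ.sub_const (2 * π / 3))).deriv, sub_add_cancel]
  · rw [(hasDerivAt_exp_two_mul_add_exp_neg_mul_cos_of_backward μ₀₂ (2 * c) hXη
      (hΩη.add_const (2 * π / 3))).deriv, add_sub_cancel_right]
  · exact (hasDerivAt_exp_two_mul_add_exp_neg_mul_cos_of_backward μ₀₂ (2 * c) hXη hΩη).deriv
  · rw [(hasDerivAt_exp_two_mul_add_exp_neg_mul_cos_of_backward μ₀₂ (2 * c) hXη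
      (hΩη.sub_const (2 * π / 3))).deriv, cos_sub_two_pi_div_three_sub_two_pi_div_three]

/-- Explicit components of the row vector `⟨mᵀ(ξ,η)|` for a first-type one-soliton
(eigenvalue `λ₁ = iρ`) satisfy the linear system
`∂m₁/∂ξ = ρm₃, ∂m₂/∂ξ = ρm₁, ∂m₃/∂ξ = ρm₂` and
`∂m₁/∂η = -ρ⁻¹m₂, ∂m₂/∂η = -ρ⁻¹m₃, ∂m₃/∂η = -ρ⁻¹m₁`. -/
theorem stmt_10 (ρ μ₀₂ c α : ℝ) (hρ : ρ ≠ 0)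
    (X Ω : ℝ → ℝ → ℝ)
    (hX : ∀ ξ η : ℝ, X ξ η = (1 / 2) * (ρ * ξ - η / ρ))
    (hΩ : ∀ ξ η : ℝ, Ω ξ η = (Real.sqrt 3 / 2) * (ρ * ξ + η / ρ))
    (m₁ m₂ m₃ : ℝ → ℝ → ℝ)
    (hm₁ : ∀ ξ η : ℝ, m₁ ξ η =
      μ₀₂ * Real.exp (2 * X ξ η) +
        2 * c * Real.exp (-X ξ η) * Real.cos (Ω ξ η - α + 2 * Real.pi / 3))
    (hm₂ : ∀ ξ η : ℝ, m₂ ξ η =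
      μ₀₂ * Real.exp (2 * X ξ η) +
        2 * c * Real.exp (-X ξ η) * Real.cos (Ω ξ η - α))
    (hm₃ : ∀ ξ η : ℝ, m₃ ξ η =
      μ₀₂ * Real.exp (2 * X ξ η) +
        2 * c * Real.exp (-X ξ η) * Real.cos (Ω ξ η - α - 2 * Real.pi / 3)) :
    ∀ ξ η : ℝ,
      deriv (fun x => m₁ x η) ξ = ρ * m₃ ξ η ∧
      deriv (fun x => m₂ x η) ξ = ρ * m₁ ξ η ∧
      deriv (fun x => m₃ x η) ξ = ρ * m₂ ξ η ∧
      deriv (fun y => m₁ ξ y) η = -ρ⁻¹ * m₂ ξ η ∧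
      deriv (fun y => m₂ ξ y) η = -ρ⁻¹ * m₃ ξ η ∧
      deriv (fun y => m₃ ξ y) η = -ρ⁻¹ * m₁ ξ η :=
  stmt_10_general ρ μ₀₂ c α X Ω hX hΩ m₁ m₂ m₃ hm₁ hm₂ hm₃
end

section
/- Let ρ be a nonzero real number and let m₁, m₂, m₃ : ℝ² → ℝ be twice continuously differentiable functions satisfying the linear system ∂m₁/∂ξ = ρm₃, ∂m₂/∂ξ = ρm₁, ∂m₃/∂ξ = ρm₂, ∂m₁/∂η = −ρ^{−1}m₂, ∂m₂/∂η = −ρ^{−1}m₃, ∂m₃/∂η = −ρ^{−1}m₁. Then on the open set where m₂ ≠ 0, the function u := (2m₁m₃ − m₂²)/m₂² satisfies u·∂²u/∂ξ∂η − (∂u/∂ξ)(∂u/∂η) + u³ − 1 = 0. Consequently, wherever u > 0, the function φ = (1/2)·ln u satisfies the Tzitzeica equation T2: 2 ∂²φ/∂ξ∂η = −(e^{2φ} − e^{−4φ}). -/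
/-!
Along every coordinate line the row `(m₁, m₂, m₃)` solves a linear ODE that shifts its
components cyclically: in `ξ` it is `(a, b, c)' = k (c, a, b)` with `k = ρ`, and in `η` the
reversed row `(m₃, m₂, m₁)` obeys the same law with `k = -ρ⁻¹`. Since `u` is symmetric in
`m₁ ↔ m₃`, one computation along such a flow gives `u_ξ`, `u_η` and `u_ξη` as rational
functions of the row, and `u u_ξη - u_ξ u_η + u³ - 1 = 0` becomes an identity that only uses
that the two rates multiply to `-1`. For `φ = ½ log u` the log-derivative rule gives
`2 φ_ξη = (u u_ξη - u_ξ u_η) / u² = (1 - u³) / u² = e^{-4φ} - e^{2φ}`.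
-/

/-- Partial derivative in the first variable. -/
noncomputable def pdXi (f : ℝ → ℝ → ℝ) (ξ η : ℝ) : ℝ := deriv (fun x => f x η) ξ

/-- Partial derivative in the second variable. -/
noncomputable def pdEta (f : ℝ → ℝ → ℝ) (ξ η : ℝ) : ℝ := deriv (fun y => f ξ y) η

/-- The mixed second partial derivative ∂²f/∂ξ∂η (first in η, then in ξ). -/
noncomputable def mixedDeriv (f : ℝ → ℝ → ℝ) (ξ η : ℝ) : ℝ :=
  deriv (fun x => deriv (fun y => f x y) η) ξ

open Filter Topology

lemma hasDerivAt_of_pdXi_eq {f : ℝ → ℝ → ℝ} {ξ η v : ℝ}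
    (hf : DifferentiableAt ℝ (Function.uncurry f) (ξ, η)) (h : pdXi f ξ η = v) :
    HasDerivAt (fun x => f x η) v ξ := by
  have hslice : DifferentiableAt ℝ (Function.uncurry f ∘ fun x => (x, η)) ξ :=
    hf.comp ξ (differentiableAt_id.prodMk (differentiableAt_const η))
  exact h ▸ hslice.hasDerivAt

lemma hasDerivAt_of_pdEta_eq {f : ℝ → ℝ → ℝ} {ξ η v : ℝ}
    (hf : DifferentiableAt ℝ (Function.uncurry f) (ξ, η)) (h : pdEta f ξ η = v) :
    HasDerivAt (fun y => f ξ y) v η := by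
  have hslice : DifferentiableAt ℝ (Function.uncurry f ∘ fun y => (ξ, y)) η :=
    hf.comp η ((differentiableAt_const ξ).prodMk differentiableAt_id)
  exact h ▸ hslice.hasDerivAt

lemma mixedDeriv_eq_of_eventually_hasDerivAt {f : ℝ → ℝ → ℝ} {g : ℝ → ℝ} {g' ξ η : ℝ}
    (hf : ∀ᶠ x in 𝓝 ξ, HasDerivAt (fun y => f x y) (g x) η) (hg : HasDerivAt g g' ξ) :
    mixedDeriv f ξ η = g' := by
  have hg_eq : (fun x => deriv (fun y => f x y) η) =ᶠ[𝓝 ξ] g := hf.mono fun x hx => hx.deriv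
  rw [mixedDeriv, hg_eq.deriv_eq, hg.deriv]

lemma two_mul_mixedDeriv_half_log {f : ℝ → ℝ → ℝ} {g : ℝ → ℝ} {g' fξ ξ η : ℝ}
    (hf : ∀ᶠ x in 𝓝 ξ, HasDerivAt (fun y => f x y) (g x) η) (hg : HasDerivAt g g' ξ)
    (hfξ : HasDerivAt (fun x => f x η) fξ ξ) (hf0 : f ξ η ≠ 0) :
    2 * mixedDeriv (fun x y => 1 / 2 * Real.log (f x y)) ξ η
      = (f ξ η * g' - fξ * g ξ) / f ξ η ^ 2 := by
  have hne : ∀ᶠ x in 𝓝 ξ, f x η ≠ 0 := hfξ.continuousAt.eventually_ne hf0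
  rw [mixedDeriv_eq_of_eventually_hasDerivAt (g := fun x => 1 / 2 * (g x / f x η))
    ((hf.and hne).mono fun x hx => (hx.1.log hx.2).const_mul _) ((hg.div hfξ hf0).const_mul _)]
  field_simp

lemma div_sq_eq_neg_exp_sub_exp {u w : ℝ} (hu : 0 < u) (hw : w + u ^ 3 - 1 = 0) :
    w / u ^ 2 = -(Real.exp (2 * (1 / 2 * Real.log u)) - Real.exp (-4 * (1 / 2 * Real.log u))) := by
  have h2 : Real.exp (2 * (1 / 2 * Real.log u)) = u := by
    rw [← mul_assoc, mul_one_div_cancel two_ne_zero, one_mul, Real.exp_log hu]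
  have h4 : Real.exp (-4 * (1 / 2 * Real.log u)) = (u ^ 2)⁻¹ := by
    rw [show -4 * (1 / 2 * Real.log u) = -(Real.log u + Real.log u) by ring, Real.exp_neg,
      Real.exp_add, Real.exp_log hu, sq]
  rw [h2, h4]
  field_simp
  linear_combination hw

/-- `u = (2m₁m₃ - m₂²)/m₂²` as a function of the row `(a, b, c) = (m₁, m₂, m₃)`. -/
noncomputable def tzitzeicaU (a b c : ℝ) : ℝ := (2 * a * c - b ^ 2) / b ^ 2

noncomputable def tzitzeicaV (a b c : ℝ) : ℝ := (b * c ^ 2 + a * b ^ 2 - 2 * a ^ 2 * c) / b ^ 3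

noncomputable def tzitzeicaW (a b c : ℝ) : ℝ :=
  (b ^ 4 - 2 * a ^ 3 * b - 2 * b * c ^ 3 - 3 * a * b ^ 2 * c + 6 * a ^ 2 * c ^ 2) / b ^ 4

lemma tzitzeicaU_comm (a b c : ℝ) : tzitzeicaU c b a = tzitzeicaU a b c := by
  rw [tzitzeicaU, tzitzeicaU, mul_right_comm]

section CyclicFlow

variable {a b c : ℝ → ℝ} {k t : ℝ} (ha : HasDerivAt a (k * c t) t) (hb : HasDerivAt b (k * a t) t)
  (hc : HasDerivAt c (k * b t) t) (hb0 : b t ≠ 0)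
include ha hb hc hb0

lemma HasDerivAt.tzitzeicaU :
    HasDerivAt (fun s => tzitzeicaU (a s) (b s) (c s))
      (2 * k * tzitzeicaV (a t) (b t) (c t)) t := by
  refine ((((ha.const_mul 2).mul hc).sub (hb.pow 2)).div (hb.pow 2)
    (pow_ne_zero 2 hb0)).congr_deriv ?_
  simp only [tzitzeicaV, Pi.pow_apply, Pi.mul_apply, Pi.sub_apply]
  field_simp
  ring

lemma HasDerivAt.tzitzeicaV_swap :
    HasDerivAt (fun s => tzitzeicaV (c s) (b s) (a s))
      (k * tzitzeicaW (a t) (b t) (c t)) t := by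
  refine ((((hb.mul (ha.pow 2)).add (hc.mul (hb.pow 2))).sub
    (((hc.pow 2).const_mul 2).mul ha)).div (hb.pow 3) (pow_ne_zero 3 hb0)).congr_deriv ?_
  simp only [tzitzeicaW, Pi.pow_apply, Pi.mul_apply, Pi.sub_apply, Pi.add_apply]
  field_simp
  ring

end CyclicFlow

lemma tzitzeica_identity {a b c k l : ℝ} (hb : b ≠ 0) (hkl : k * l = -1) :
    tzitzeicaU a b c * (2 * l * (k * tzitzeicaW a b c))
      - 2 * k * tzitzeicaV a b c * (2 * l * tzitzeicaV c b a) + tzitzeicaU a b c ^ 3 - 1 = 0 := by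
  simp only [tzitzeicaU, tzitzeicaV, tzitzeicaW]
  field_simp
  linear_combination ((2 * a * c - b ^ 2) ^ 3 - b ^ 6) * hkl

/-- If `(m₁,m₂,m₃)` is a C² solution of the linear system
`∂m₁/∂ξ = ρm₃, ∂m₂/∂ξ = ρm₁, ∂m₃/∂ξ = ρm₂`,
`∂m₁/∂η = -ρ⁻¹m₂, ∂m₂/∂η = -ρ⁻¹m₃, ∂m₃/∂η = -ρ⁻¹m₁`,
then where `m₂ ≠ 0` the function `u = (2m₁m₃ - m₂²)/m₂²` satisfies
`u·u_{ξη} - u_ξ·u_η + u³ - 1 = 0`; consequently wherever `u > 0`,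
`φ = (1/2)·ln u` satisfies the Tzitzeica equation T2:
`2 φ_{ξη} = -(e^{2φ} - e^{-4φ})`. -/
theorem stmt_11 (ρ : ℝ) (hρ : ρ ≠ 0) (m₁ m₂ m₃ : ℝ → ℝ → ℝ)
    (hm₁ : ContDiff ℝ 2 (Function.uncurry m₁))
    (hm₂ : ContDiff ℝ 2 (Function.uncurry m₂))
    (hm₃ : ContDiff ℝ 2 (Function.uncurry m₃))
    (hsys : ∀ ξ η : ℝ,
      pdXi m₁ ξ η = ρ * m₃ ξ η ∧ pdXi m₂ ξ η = ρ * m₁ ξ η ∧ pdXi m₃ ξ η = ρ * m₂ ξ η ∧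
      pdEta m₁ ξ η = -ρ⁻¹ * m₂ ξ η ∧ pdEta m₂ ξ η = -ρ⁻¹ * m₃ ξ η ∧
      pdEta m₃ ξ η = -ρ⁻¹ * m₁ ξ η)
    (u : ℝ → ℝ → ℝ)
    (hu : ∀ ξ η : ℝ, u ξ η = (2 * m₁ ξ η * m₃ ξ η - (m₂ ξ η) ^ 2) / (m₂ ξ η) ^ 2)
    (φ : ℝ → ℝ → ℝ) (hφ : ∀ ξ η : ℝ, φ ξ η = (1 / 2) * Real.log (u ξ η)) :
    ∀ ξ η : ℝ, m₂ ξ η ≠ 0 →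
      (u ξ η * mixedDeriv u ξ η - pdXi u ξ η * pdEta u ξ η + (u ξ η) ^ 3 - 1 = 0) ∧
      (0 < u ξ η →
        2 * mixedDeriv φ ξ η = -(Real.exp (2 * φ ξ η) - Real.exp (-4 * φ ξ η))) := by
  obtain rfl : φ = fun x y => 1 / 2 * Real.log (u x y) := funext₂ hφ
  obtain rfl : u = fun x y => tzitzeicaU (m₁ x y) (m₂ x y) (m₃ x y) := funext₂ hu
  intro ξ η hb
  have hξ (x : ℝ) : HasDerivAt (fun s => m₁ s η) (ρ * m₃ x η) x ∧
      HasDerivAt (fun s => m₂ s η) (ρ * m₁ x η) x ∧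
      HasDerivAt (fun s => m₃ s η) (ρ * m₂ x η) x :=
    ⟨hasDerivAt_of_pdXi_eq (hm₁.differentiable two_ne_zero _) (hsys x η).1,
      hasDerivAt_of_pdXi_eq (hm₂.differentiable two_ne_zero _) (hsys x η).2.1,
      hasDerivAt_of_pdXi_eq (hm₃.differentiable two_ne_zero _) (hsys x η).2.2.1⟩
  have hη (x : ℝ) : HasDerivAt (fun s => m₁ x s) (-ρ⁻¹ * m₂ x η) η ∧
      HasDerivAt (fun s => m₂ x s) (-ρ⁻¹ * m₃ x η) η ∧
      HasDerivAt (fun s => m₃ x s) (-ρ⁻¹ * m₁ x η) η :=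
    ⟨hasDerivAt_of_pdEta_eq (hm₁.differentiable two_ne_zero _) (hsys x η).2.2.2.1,
      hasDerivAt_of_pdEta_eq (hm₂.differentiable two_ne_zero _) (hsys x η).2.2.2.2.1,
      hasDerivAt_of_pdEta_eq (hm₃.differentiable two_ne_zero _) (hsys x η).2.2.2.2.2⟩
  have huξ : HasDerivAt (fun x => tzitzeicaU (m₁ x η) (m₂ x η) (m₃ x η))
      (2 * ρ * tzitzeicaV (m₁ ξ η) (m₂ ξ η) (m₃ ξ η)) ξ :=
    (hξ ξ).1.tzitzeicaU (hξ ξ).2.1 (hξ ξ).2.2 hb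
  have huη (x : ℝ) (hx : m₂ x η ≠ 0) : HasDerivAt (fun y => tzitzeicaU (m₁ x y) (m₂ x y) (m₃ x y))
      (2 * -ρ⁻¹ * tzitzeicaV (m₃ x η) (m₂ x η) (m₁ x η)) η := by
    simpa only [tzitzeicaU_comm] using (hη x).2.2.tzitzeicaU (hη x).2.1 (hη x).1 hx
  have hmixed : HasDerivAt (fun x => 2 * -ρ⁻¹ * tzitzeicaV (m₃ x η) (m₂ x η) (m₁ x η))
      (2 * -ρ⁻¹ * (ρ * tzitzeicaW (m₁ ξ η) (m₂ ξ η) (m₃ ξ η))) ξ :=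
    (HasDerivAt.tzitzeicaV_swap (t := ξ) (hξ ξ).1 (hξ ξ).2.1 (hξ ξ).2.2 hb).const_mul _
  have hne : ∀ᶠ x in 𝓝 ξ, m₂ x η ≠ 0 := (hξ ξ).2.1.continuousAt.eventually_ne hb
  have hT := tzitzeica_identity (a := m₁ ξ η) (c := m₃ ξ η) hb
    (by rw [mul_neg, mul_inv_cancel₀ hρ] : ρ * -ρ⁻¹ = -1)
  refine ⟨?_, fun hpos => ?_⟩
  · rwa [mixedDeriv_eq_of_eventually_hasDerivAt (hne.mono huη) hmixed, pdXi, pdEta, huξ.deriv,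
      (huη ξ hb).deriv]
  · rw [two_mul_mixedDeriv_half_log (hne.mono huη) hmixed huξ hpos.ne']
    exact div_sq_eq_neg_exp_sub_exp hpos (by linear_combination hT)
end

section
/- Let ρ ≠ 0, c, μ₀₂, α be real numbers, and define X(ξ,η) = (1/2)(ρξ − η/ρ) and Ω̃(ξ,η) = (√3/2)(ρξ + η/ρ) − α. Define u(ξ,η) = [c²e^{−3X}(4cos²Ω̃ − 6) − 8cμ₀₂cos Ω̃ + μ₀₂²e^{3X}] / [4c²e^{−3X}cos²Ω̃ + 4cμ₀₂cos Ω̃ + μ₀₂²e^{3X}]. Then on the open set where the denominator is nonzero, u satisfies u·∂²u/∂ξ∂η − (∂u/∂ξ)(∂u/∂η) + u³ − 1 = 0; i.e., u = e^{2φ} gives the one-soliton solution of first type of the T2 Tzitzeica equation 2 ∂²φ/∂ξ∂η = −(e^{2φ} − e^{−4φ}). -/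
/-!
In the coordinates `p = ρξ`, `q = η/ρ` one has `X = (p - q)/2` and `Ω̃ = (√3/2)(p + q) - α`, and
the numerator and denominator of `u` are `e^{-3X}(τ² - 6κ)` and `e^{-3X}τ²` with the tau function
`τ = 2c cos Ω̃ + μ₀₂ e^{3X}` and `κ = c(c + 2μ₀₂ e^{3X} cos Ω̃)`. Since `∂ξ ∂η = ∂p ∂q` and
`∂ξ u · ∂η u = ∂p u · ∂q u`, the equation may be checked in `(p, q)`. There `τ` obeys the Hirota
bilinear identity `τ τ_pq - τ_p τ_q = -3κ` (which is `sin² + cos² = 1`), i.e. `u = 1 + 2 (log τ)_pq`,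
and the numerator of `u u_pq - u_p u_q + u³ - 1` over the common denominator `τ⁶` is a polynomial
multiple of that identity.
-/

open Real Topology

noncomputable def tzitzeicaDefect (u : ℝ → ℝ → ℝ) (ξ η : ℝ) : ℝ :=
  u ξ η * mixedDeriv u ξ η - pdXi u ξ η * pdEta u ξ η + u ξ η ^ 3 - 1

section Rescaling

variable (g : ℝ → ℝ → ℝ) (a b ξ η : ℝ)

theorem pdXi_comp_mul : pdXi (fun x y => g (a * x) (b * y)) ξ η = a * pdXi g (a * ξ) (b * η) :=
  deriv_comp_mul_left a (fun x => g x (b * η)) ξ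

theorem pdEta_comp_mul : pdEta (fun x y => g (a * x) (b * y)) ξ η = b * pdEta g (a * ξ) (b * η) :=
  deriv_comp_mul_left b (g (a * ξ)) η

theorem mixedDeriv_comp_mul :
    mixedDeriv (fun x y => g (a * x) (b * y)) ξ η = a * b * mixedDeriv g (a * ξ) (b * η) := by
  have inner (x : ℝ) : deriv (fun y => g (a * x) (b * y)) η = b * deriv (g (a * x)) (b * η) :=
    deriv_comp_mul_left b (g (a * x)) η
  simp only [mixedDeriv, inner, deriv_const_mul_field']
  rw [deriv_comp_mul_left a (fun x => deriv (g x) (b * η)) ξ, smul_eq_mul]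
  ring

theorem tzitzeicaDefect_comp_boost {ρ : ℝ} (hρ : ρ ≠ 0) :
    tzitzeicaDefect (fun x y => g (ρ * x) (y / ρ)) ξ η = tzitzeicaDefect g (ρ * ξ) (η / ρ) := by
  simp only [div_eq_inv_mul, tzitzeicaDefect, pdXi_comp_mul, pdEta_comp_mul, mixedDeriv_comp_mul]
  field_simp

end Rescaling

theorem HasDerivAt.div_pow {f g : ℝ → ℝ} {f' g' x : ℝ} (hf : HasDerivAt f f' x)
    (hg : HasDerivAt g g' x) (hx : g x ≠ 0) (n : ℕ) :
    HasDerivAt (fun y => f y / g y ^ n) ((f' * g x - n * f x * g') / g x ^ (n + 1)) x := by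
  refine (hf.div (hg.fun_pow n) (pow_ne_zero n hx)).congr_deriv ?_
  rcases n with _ | n
  · simp [hx]
  · field_simp
    push_cast
    ring

theorem mixedDeriv_div_pow {f g : ℝ → ℝ → ℝ} {fq gq : ℝ → ℝ} {fp gp fpq gpq p q : ℝ} (n : ℕ)
    (hfq : ∀ x, HasDerivAt (f x) (fq x) q) (hgq : ∀ x, HasDerivAt (g x) (gq x) q)
    (hfp : HasDerivAt (fun x => f x q) fp p) (hgp : HasDerivAt (fun x => g x q) gp p)
    (hfqp : HasDerivAt fq fpq p) (hgqp : HasDerivAt gq gpq p) (hg : g p q ≠ 0) :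
    mixedDeriv (fun x y => f x y / g x y ^ n) p q =
      ((fpq * g p q + fq p * gp - n * (fp * gq p + f p q * gpq)) * g p q
        - (n + 1) * (fq p * g p q - n * f p q * gq p) * gp) / g p q ^ (n + 2) := by
  have hpartial : (fun x => deriv (fun y => f x y / g x y ^ n) q) =ᶠ[𝓝 p]
      fun x => (fq x * g x q - n * f x q * gq x) / g x q ^ (n + 1) := by
    filter_upwards [hgp.continuousAt.eventually_ne hg] with x hx
    exact ((hfq x).div_pow (hgq x) hx n).deriv
  have hnum : HasDerivAt (fun x => fq x * g x q - n * f x q * gq x)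
      (fpq * g p q + fq p * gp - n * (fp * gq p + f p q * gpq)) p :=
    ((hfqp.fun_mul hgp).fun_sub ((hfp.const_mul (n : ℝ)).fun_mul hgqp)).congr_deriv (by ring)
  rw [mixedDeriv, hpartial.deriv_eq, (hnum.div_pow hgp hg (n + 1)).deriv]
  push_cast
  ring

theorem tzitzeicaDefect_div_sq {f g : ℝ → ℝ → ℝ} {fq gq : ℝ → ℝ} {fp gp fpq gpq p q : ℝ}
    (hfq : ∀ x, HasDerivAt (f x) (fq x) q) (hgq : ∀ x, HasDerivAt (g x) (gq x) q)
    (hfp : HasDerivAt (fun x => f x q) fp p) (hgp : HasDerivAt (fun x => g x q) gp p)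
    (hfqp : HasDerivAt fq fpq p) (hgqp : HasDerivAt gq gpq p) (hg : g p q ≠ 0) :
    tzitzeicaDefect (fun x y => f x y / g x y ^ 2) p q =
      (f p q * ((fpq * g p q + fq p * gp - 2 * (fp * gq p + f p q * gpq)) * g p q
          - 3 * (fq p * g p q - 2 * f p q * gq p) * gp)
        - (fp * g p q - 2 * f p q * gp) * (fq p * g p q - 2 * f p q * gq p)
        + f p q ^ 3 - g p q ^ 6) / g p q ^ 6 := by
  unfold tzitzeicaDefect pdXi pdEta
  rw [mixedDeriv_div_pow 2 hfq hgq hfp hgp hfqp hgqp hg, (hfp.div_pow hgp hg 2).deriv,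
    ((hfq p).div_pow (hgq p) hg 2).deriv]
  field_simp
  ring

namespace TzitzeicaSoliton

variable (c μ α : ℝ)

noncomputable def cosΩ (p q : ℝ) : ℝ := cos (√3 / 2 * (p + q) - α)
noncomputable def sinΩ (p q : ℝ) : ℝ := sin (√3 / 2 * (p + q) - α)
noncomputable def exp3X (p q : ℝ) : ℝ := exp (3 / 2 * (p - q))

noncomputable def τ (p q : ℝ) : ℝ := 2 * c * cosΩ α p q + μ * exp3X p q
noncomputable def τq (p q : ℝ) : ℝ := -c * (√3 * sinΩ α p q) - 3 / 2 * μ * exp3X p q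
noncomputable def κ (p q : ℝ) : ℝ := c * (c + 2 * μ * cosΩ α p q * exp3X p q)
noncomputable def κq (p q : ℝ) : ℝ := -c * μ * exp3X p q * (√3 * sinΩ α p q + 3 * cosΩ α p q)

/-- Not `1 - 6κ/τ²`: in this form `U` agrees with `num / den` also where `den = 0`. -/
noncomputable def U (p q : ℝ) : ℝ := (τ c μ α p q ^ 2 - 6 * κ c μ α p q) / τ c μ α p q ^ 2

noncomputable def num (p q : ℝ) : ℝ :=
  c ^ 2 * (exp3X p q)⁻¹ * (4 * cosΩ α p q ^ 2 - 6) - 8 * c * μ * cosΩ α p q + μ ^ 2 * exp3X p q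

noncomputable def den (p q : ℝ) : ℝ :=
  4 * c ^ 2 * (exp3X p q)⁻¹ * cosΩ α p q ^ 2 + 4 * c * μ * cosΩ α p q + μ ^ 2 * exp3X p q

variable {c μ α} (p q : ℝ)

theorem hasDerivAt_cosΩ_left :
    HasDerivAt (fun x => cosΩ α x q) (-(√3 / 2) * sinΩ α p q) p := by
  have := ((((hasDerivAt_id p).add_const q).const_mul (√3 / 2)).sub_const α).cos
  exact this.congr_deriv (by simp [sinΩ]; ring)

theorem hasDerivAt_cosΩ_right :
    HasDerivAt (cosΩ α p) (-(√3 / 2) * sinΩ α p q) q := by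
  have := ((((hasDerivAt_id q).const_add p).const_mul (√3 / 2)).sub_const α).cos
  exact this.congr_deriv (by simp [sinΩ]; ring)

theorem hasDerivAt_sinΩ_left :
    HasDerivAt (fun x => sinΩ α x q) (√3 / 2 * cosΩ α p q) p := by
  have := ((((hasDerivAt_id p).add_const q).const_mul (√3 / 2)).sub_const α).sin
  exact this.congr_deriv (by simp [cosΩ]; ring)

theorem hasDerivAt_exp3X_left :
    HasDerivAt (fun x => exp3X x q) (3 / 2 * exp3X p q) p := by
  have := (((hasDerivAt_id p).sub_const q).const_mul (3 / 2 : ℝ)).exp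
  exact this.congr_deriv (by simp [exp3X]; ring)

theorem hasDerivAt_exp3X_right :
    HasDerivAt (exp3X p) (-(3 / 2) * exp3X p q) q := by
  have := (((hasDerivAt_id q).const_sub p).const_mul (3 / 2 : ℝ)).exp
  exact this.congr_deriv (by simp [exp3X]; ring)

theorem hasDerivAt_τ_left :
    HasDerivAt (fun x => τ c μ α x q) (-c * (√3 * sinΩ α p q) + 3 / 2 * μ * exp3X p q) p :=
  (((hasDerivAt_cosΩ_left p q).const_mul (2 * c)).add
    ((hasDerivAt_exp3X_left p q).const_mul μ)).congr_deriv (by ring)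

theorem hasDerivAt_τ_right : HasDerivAt (τ c μ α p) (τq c μ α p q) q :=
  (((hasDerivAt_cosΩ_right p q).const_mul (2 * c)).add
    ((hasDerivAt_exp3X_right p q).const_mul μ)).congr_deriv (by unfold τq; ring)

theorem hasDerivAt_τq_left :
    HasDerivAt (fun x => τq c μ α x q) (-(3 / 2) * c * cosΩ α p q - 9 / 4 * μ * exp3X p q) p := by
  have h3 : √3 * √3 = 3 := mul_self_sqrt (by norm_num)
  refine ((((hasDerivAt_sinΩ_left p q).const_mul √3).const_mul (-c)).sub
    ((hasDerivAt_exp3X_left p q).const_mul (3 / 2 * μ))).congr_deriv ?_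
  linear_combination (-c / 2 * cosΩ α p q) * h3

theorem hasDerivAt_κ_left :
    HasDerivAt (fun x => κ c μ α x q)
      (c * μ * exp3X p q * (3 * cosΩ α p q - √3 * sinΩ α p q)) p :=
  ((((hasDerivAt_cosΩ_left p q).const_mul (2 * μ)).mul
    (hasDerivAt_exp3X_left p q)).const_add c |>.const_mul c).congr_deriv (by ring)

theorem hasDerivAt_κ_right : HasDerivAt (κ c μ α p) (κq c μ α p q) q :=
  ((((hasDerivAt_cosΩ_right p q).const_mul (2 * μ)).mul
    (hasDerivAt_exp3X_right p q)).const_add c |>.const_mul c).congr_deriv (by unfold κq; ring)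

theorem hasDerivAt_κq_left :
    HasDerivAt (fun x => κq c μ α x q) (-6 * c * μ * cosΩ α p q * exp3X p q) p := by
  have h3 : √3 * √3 = 3 := mul_self_sqrt (by norm_num)
  refine ((hasDerivAt_exp3X_left p q).const_mul (-c * μ) |>.fun_mul
    (((hasDerivAt_sinΩ_left p q).const_mul √3).fun_add
      ((hasDerivAt_cosΩ_left p q).const_mul 3))).congr_deriv ?_
  linear_combination (-c * μ * exp3X p q / 2 * cosΩ α p q) * h3

theorem τ_mul_τpq_sub_τp_mul_τq :
    τ c μ α p q * (-(3 / 2) * c * cosΩ α p q - 9 / 4 * μ * exp3X p q)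
      - (-c * (√3 * sinΩ α p q) + 3 / 2 * μ * exp3X p q) * τq c μ α p q = -3 * κ c μ α p q := by
  have h3 : √3 ^ 2 = 3 := sq_sqrt (by norm_num)
  have hsc := sin_sq_add_cos_sq (√3 / 2 * (p + q) - α)
  unfold τ τq κ cosΩ sinΩ
  linear_combination (-c ^ 2 * sin (√3 / 2 * (p + q) - α) ^ 2) * h3 - 3 * c ^ 2 * hsc

theorem tzitzeicaDefect_U (hτ : τ c μ α p q ≠ 0) : tzitzeicaDefect (U c μ α) p q = 0 := by
  have hNq (x : ℝ) : HasDerivAt (fun y => τ c μ α x y ^ 2 - 6 * κ c μ α x y)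
      (2 * τ c μ α x q * τq c μ α x q - 6 * κq c μ α x q) q :=
    (((hasDerivAt_τ_right x q).fun_pow 2).fun_sub
      ((hasDerivAt_κ_right x q).const_mul 6)).congr_deriv (by ring)
  have hNp : HasDerivAt (fun x => τ c μ α x q ^ 2 - 6 * κ c μ α x q) _ p :=
    ((hasDerivAt_τ_left p q).fun_pow 2).fun_sub ((hasDerivAt_κ_left p q).const_mul 6)
  have hNqp : HasDerivAt (fun x => 2 * τ c μ α x q * τq c μ α x q - 6 * κq c μ α x q) _ p :=
    (((hasDerivAt_τ_left p q).const_mul 2).fun_mul (hasDerivAt_τq_left p q)).fun_sub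
      ((hasDerivAt_κq_left p q).const_mul 6)
  have hU : U c μ α = fun x y => (τ c μ α x y ^ 2 - 6 * κ c μ α x y) / τ c μ α x y ^ 2 := rfl
  rw [hU, tzitzeicaDefect_div_sq hNq (hasDerivAt_τ_right · q) hNp (hasDerivAt_τ_left p q) hNqp
    (hasDerivAt_τq_left p q) hτ, div_eq_zero_iff]
  left
  have hbilin := τ_mul_τpq_sub_τp_mul_τq (c := c) (μ := μ) (α := α) p q
  unfold τ τq κ κq
  unfold τ τq κ at hbilin
  set C := cosΩ α p q
  set E := exp3X p q
  linear_combination 12 * (μ ^ 4 * E ^ 4 + 6 * c * μ ^ 3 * C * E ^ 3 + 3 * c ^ 2 * μ ^ 2 * E ^ 2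
    - 12 * c ^ 2 * μ ^ 2 * C ^ 2 * E ^ 2 - 12 * c ^ 3 * μ * C * E + 8 * c ^ 3 * μ * C ^ 3 * E
    - 6 * c ^ 4 + 12 * c ^ 4 * C ^ 2) * hbilin

theorem exp3X_pos : 0 < exp3X p q := exp_pos _

theorem den_eq : den c μ α p q = (exp3X p q)⁻¹ * τ c μ α p q ^ 2 := by
  have := (exp3X_pos p q).ne'
  unfold den τ
  field_simp
  ring

theorem num_eq : num c μ α p q = (exp3X p q)⁻¹ * (τ c μ α p q ^ 2 - 6 * κ c μ α p q) := by
  have := (exp3X_pos p q).ne'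
  unfold num τ κ
  field_simp
  ring

theorem num_div_den : num c μ α p q / den c μ α p q = U c μ α p q := by
  rw [num_eq, den_eq, mul_div_mul_left _ _ (inv_ne_zero (exp3X_pos p q).ne'), U]

theorem τ_ne_zero_of_den_ne_zero (h : den c μ α p q ≠ 0) : τ c μ α p q ≠ 0 := by
  rw [den_eq] at h
  exact pow_ne_zero_iff two_ne_zero |>.mp (right_ne_zero_of_mul h)

end TzitzeicaSoliton

/-- The explicit one-soliton solution of first type: with
`X = (1/2)(ρξ - η/ρ)`, `Ω̃ = (√3/2)(ρξ + η/ρ) - α`, the function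
`u = [c²e^{-3X}(4cos²Ω̃ - 6) - 8cμ₀₂cos Ω̃ + μ₀₂²e^{3X}] /
     [4c²e^{-3X}cos²Ω̃ + 4cμ₀₂cos Ω̃ + μ₀₂²e^{3X}]`
satisfies `u·u_{ξη} - u_ξ·u_η + u³ - 1 = 0` wherever the denominator is nonzero,
i.e. `u = e^{2φ}` is a solution of the T2 Tzitzeica equation. -/
theorem stmt_12 (ρ c μ₀₂ α : ℝ) (hρ : ρ ≠ 0)
    (X Ω : ℝ → ℝ → ℝ)
    (hX : ∀ ξ η : ℝ, X ξ η = (1 / 2) * (ρ * ξ - η / ρ))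
    (hΩ : ∀ ξ η : ℝ, Ω ξ η = (Real.sqrt 3 / 2) * (ρ * ξ + η / ρ) - α)
    (num den u : ℝ → ℝ → ℝ)
    (hnum : ∀ ξ η : ℝ, num ξ η =
      c ^ 2 * Real.exp (-3 * X ξ η) * (4 * Real.cos (Ω ξ η) ^ 2 - 6) -
        8 * c * μ₀₂ * Real.cos (Ω ξ η) + μ₀₂ ^ 2 * Real.exp (3 * X ξ η))
    (hden : ∀ ξ η : ℝ, den ξ η =
      4 * c ^ 2 * Real.exp (-3 * X ξ η) * Real.cos (Ω ξ η) ^ 2 +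
        4 * c * μ₀₂ * Real.cos (Ω ξ η) + μ₀₂ ^ 2 * Real.exp (3 * X ξ η))
    (hu : ∀ ξ η : ℝ, u ξ η = num ξ η / den ξ η) :
    ∀ ξ η : ℝ, den ξ η ≠ 0 →
      u ξ η * mixedDeriv u ξ η - pdXi u ξ η * pdEta u ξ η + (u ξ η) ^ 3 - 1 = 0 := by
  have hboost (x y : ℝ) : num x y = TzitzeicaSoliton.num c μ₀₂ α (ρ * x) (y / ρ) ∧
      den x y = TzitzeicaSoliton.den c μ₀₂ α (ρ * x) (y / ρ) := by
    simp only [hnum, hden, hX, hΩ, TzitzeicaSoliton.num, TzitzeicaSoliton.den,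
      TzitzeicaSoliton.exp3X, TzitzeicaSoliton.cosΩ, neg_mul, exp_neg]
    constructor <;> ring_nf
  have hu' : u = fun x y => TzitzeicaSoliton.U c μ₀₂ α (ρ * x) (y / ρ) := by
    funext x y
    rw [hu, (hboost x y).1, (hboost x y).2, TzitzeicaSoliton.num_div_den]
  intro ξ η hden0
  rw [(hboost ξ η).2] at hden0
  rw [hu']
  exact (tzitzeicaDefect_comp_boost _ ξ η hρ).trans
    (TzitzeicaSoliton.tzitzeicaDefect_U _ _ (TzitzeicaSoliton.τ_ne_zero_of_den_ne_zero _ _ hden0))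
end

section
/- Let ρ ≠ 0 and α be real numbers and define Θ(ξ,η) = (√3/2)(ρξ + η/ρ) − α. Then on the open set where cos Θ ≠ 0, the function u(ξ,η) = −(3/2)·tan²Θ − 1/2 satisfies u·∂²u/∂ξ∂η − (∂u/∂ξ)(∂u/∂η) + u³ − 1 = 0. Equivalently, the complex-valued function φ(ξ,η) = iπ/2 + (1/2)·ln[(3/2)·tan²Θ + 1/2] satisfies the T2 Tzitzeica equation 2 ∂²φ/∂ξ∂η = −(e^{2φ} − e^{−4φ}) there. -/
/-- The mixed second partial derivative of a complex-valued function. -/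
noncomputable def mixedDerivC (f : ℝ → ℝ → ℂ) (ξ η : ℝ) : ℂ :=
  deriv (fun x => deriv (fun y => f x y) η) ξ

/-!
Both `u = -g(Θ)` and `φ = iπ/2 + (1/2) log g(Θ)`, with `g θ = (3/2) tan² θ + 1/2`, depend on
`(ξ, η)` only through the phase `Θ = aξ + bη + c`, and `ab = 3/4`; so `∂_ξ ∂_η` acts as
`(3/4) d²/dθ²`. Both equations then reduce to the identity `(3/4)(g g'' - g'²) = g³ + 1`, a
polynomial identity in `tan θ` once `tan' = 1 + tan²`. For `φ` one also uses `e^{2φ} = -g`,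
hence `e^{-4φ} = g⁻²`, and `(log g)'' = (g g'' - g'²)/g²`.
-/

open Real Filter Topology

namespace Real

theorem hasDerivAt_tan' {x : ℝ} (h : cos x ≠ 0) : HasDerivAt tan (1 + tan x ^ 2) x := by
  simpa [← inv_one_add_tan_sq h] using hasDerivAt_tan h

end Real

section AffineComposition

variable {E : Type*} [NormedAddCommGroup E] [NormedSpace ℝ E]
  {F F' : ℝ → E} {f : ℝ → ℝ → E} {a b c ξ η : ℝ}

theorem HasDerivAt.comp_affine {G : ℝ → E} {G' : E} {d x : ℝ}
    (hG : HasDerivAt G G' (a * x + d)) :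
    HasDerivAt (fun x => G (a * x + d)) (a • G') x := by
  simpa [Function.comp_def] using hG.scomp x (((hasDerivAt_id x).const_mul a).add_const d)

theorem deriv_fst_of_eq_comp_affine (hf : ∀ x y, f x y = F (a * x + b * y + c))
    {F₀ : E} (hF : HasDerivAt F F₀ (a * ξ + b * η + c)) :
    deriv (fun x => f x η) ξ = a • F₀ := by
  simp_rw [hf, add_right_comm _ (b * η), add_assoc]
  exact (HasDerivAt.comp_affine (by rwa [← add_assoc, add_right_comm])).deriv

theorem deriv_snd_of_eq_comp_affine (hf : ∀ x y, f x y = F (a * x + b * y + c))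
    {F₀ : E} (hF : HasDerivAt F F₀ (a * ξ + b * η + c)) :
    deriv (fun y => f ξ y) η = b • F₀ := by
  simp_rw [hf, add_comm (a * ξ), add_assoc]
  exact (HasDerivAt.comp_affine (by rwa [← add_assoc, add_comm (b * η)])).deriv

theorem deriv_deriv_of_eq_comp_affine (hf : ∀ x y, f x y = F (a * x + b * y + c)) {F'' : E}
    (hF : ∀ᶠ θ in 𝓝 (a * ξ + b * η + c), HasDerivAt F (F' θ) θ)
    (hF' : HasDerivAt F' F'' (a * ξ + b * η + c)) :
    deriv (fun x => deriv (fun y => f x y) η) ξ = (a * b) • F'' := by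
  have hθ : Tendsto (fun x => a * x + b * η + c) (𝓝 ξ) (𝓝 (a * ξ + b * η + c)) :=
    (by fun_prop : Continuous fun x => a * x + b * η + c).tendsto ξ
  have hinner : (fun x => deriv (fun y => f x y) η) =ᶠ[𝓝 ξ]
      fun x => b • F' (a * x + (b * η + c)) := by
    filter_upwards [hθ.eventually hF] with x hx
    rw [← add_assoc]
    exact deriv_snd_of_eq_comp_affine hf hx
  rw [hinner.deriv_eq, mul_comm a b, ← smul_smul]
  exact ((HasDerivAt.comp_affine (G := F') (by rwa [← add_assoc])).const_smul b).deriv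

end AffineComposition

noncomputable def tanProfile (θ : ℝ) : ℝ := (3 / 2) * tan θ ^ 2 + 1 / 2

theorem tanProfile_pos (θ : ℝ) : 0 < tanProfile θ := by
  unfold tanProfile
  positivity

theorem hasDerivAt_tanProfile {θ : ℝ} (h : cos θ ≠ 0) :
    HasDerivAt tanProfile (3 * tan θ * (1 + tan θ ^ 2)) θ := by
  have := (((hasDerivAt_tan' h).pow 2).const_mul (3 / 2 : ℝ)).add_const (1 / 2 : ℝ)
  exact this.congr_deriv (by ring)

theorem hasDerivAt_tanProfile_deriv {θ : ℝ} (h : cos θ ≠ 0) :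
    HasDerivAt (fun θ => 3 * tan θ * (1 + tan θ ^ 2))
      (3 * (1 + tan θ ^ 2) * (1 + 3 * tan θ ^ 2)) θ := by
  have ht := hasDerivAt_tan' h
  have := (ht.const_mul 3).mul ((ht.pow 2).const_add 1)
  exact this.congr_deriv (by simp only [Pi.pow_apply]; ring)

theorem tanProfile_ode (θ : ℝ) :
    (3 / 4) * (tanProfile θ * (3 * (1 + tan θ ^ 2) * (1 + 3 * tan θ ^ 2))
      - (3 * tan θ * (1 + tan θ ^ 2)) ^ 2) = tanProfile θ ^ 3 + 1 := by
  unfold tanProfile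
  ring

theorem hasDerivAt_log_tanProfile {θ : ℝ} (h : cos θ ≠ 0) :
    HasDerivAt (fun θ => log (tanProfile θ))
      (3 * tan θ * (1 + tan θ ^ 2) / tanProfile θ) θ :=
  (hasDerivAt_tanProfile h).log (tanProfile_pos θ).ne'

theorem hasDerivAt_log_tanProfile_deriv {θ : ℝ} (h : cos θ ≠ 0) :
    HasDerivAt (fun θ => 3 * tan θ * (1 + tan θ ^ 2) / tanProfile θ)
      ((3 * (1 + tan θ ^ 2) * (1 + 3 * tan θ ^ 2) * tanProfile θ
        - 3 * tan θ * (1 + tan θ ^ 2) * (3 * tan θ * (1 + tan θ ^ 2)))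
        / tanProfile θ ^ 2) θ :=
  (hasDerivAt_tanProfile_deriv h).div (hasDerivAt_tanProfile h) (tanProfile_pos θ).ne'

theorem exp_two_mul_I_pi_div_two_add_half_log {w : ℝ} (hw : 0 < w) :
    Complex.exp (2 * (Complex.I * π / 2 + (1 / 2) * (log w : ℂ))) = -w := by
  have h : 2 * (Complex.I * π / 2 + (1 / 2) * (log w : ℂ)) = π * Complex.I + (log w : ℂ) := by
    ring
  rw [h, Complex.exp_add, Complex.exp_pi_mul_I, ← Complex.ofReal_exp, exp_log hw, neg_one_mul]

section TravelingWave

variable {a b c ξ η : ℝ}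

theorem eventually_cos_ne_zero {θ₀ : ℝ} (h : cos θ₀ ≠ 0) :
    ∀ᶠ θ in 𝓝 θ₀, cos θ ≠ 0 :=
  continuous_cos.continuousAt.eventually_ne h

theorem tzitzeica_u_of_eq_neg_tanProfile {u : ℝ → ℝ → ℝ} (hab : a * b = 3 / 4)
    (hu : ∀ x y, u x y = -tanProfile (a * x + b * y + c))
    (hcos : cos (a * ξ + b * η + c) ≠ 0) :
    u ξ η * mixedDeriv u ξ η - pdXi u ξ η * pdEta u ξ η + u ξ η ^ 3 - 1 = 0 := by
  set θ := a * ξ + b * η + c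
  have hF := fun {θ} (h : cos θ ≠ 0) => (hasDerivAt_tanProfile h).neg
  have huξ : pdXi u ξ η = a * -(3 * tan θ * (1 + tan θ ^ 2)) :=
    deriv_fst_of_eq_comp_affine (F := fun θ => -tanProfile θ) hu (hF hcos)
  have huη : pdEta u ξ η = b * -(3 * tan θ * (1 + tan θ ^ 2)) :=
    deriv_snd_of_eq_comp_affine (F := fun θ => -tanProfile θ) hu (hF hcos)
  have huξη := deriv_deriv_of_eq_comp_affine (F := fun θ => -tanProfile θ) hu
    ((eventually_cos_ne_zero hcos).mono fun _ => hF) (hasDerivAt_tanProfile_deriv hcos).neg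
  rw [mixedDeriv, huξη, huξ, huη, hu, smul_eq_mul]
  linear_combination (tanProfile θ * (3 * (1 + tan θ ^ 2) * (1 + 3 * tan θ ^ 2))
      - (3 * tan θ * (1 + tan θ ^ 2)) ^ 2) * hab + tanProfile_ode θ

theorem tzitzeica_phi_of_eq_log_tanProfile {φ : ℝ → ℝ → ℂ} (hab : a * b = 3 / 4)
    (hφ : ∀ x y, φ x y =
      Complex.I * π / 2 + (1 / 2) * (log (tanProfile (a * x + b * y + c)) : ℂ))
    (hcos : cos (a * ξ + b * η + c) ≠ 0) :
    2 * mixedDerivC φ ξ η = -(Complex.exp (2 * φ ξ η) - Complex.exp (-4 * φ ξ η)) := by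
  set θ := a * ξ + b * η + c
  have hF := fun {θ} (h : cos θ ≠ 0) =>
    (((hasDerivAt_log_tanProfile h).ofReal_comp).const_mul (1 / 2 : ℂ)).const_add
      (Complex.I * π / 2)
  have hφξη := deriv_deriv_of_eq_comp_affine hφ ((eventually_cos_ne_zero hcos).mono fun _ => hF)
    ((hasDerivAt_log_tanProfile_deriv hcos).ofReal_comp.const_mul (1 / 2 : ℂ))
  have hexp : Complex.exp (2 * φ ξ η) = -tanProfile θ := by
    rw [hφ]
    exact exp_two_mul_I_pi_div_two_add_half_log (tanProfile_pos θ)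
  have hexp_neg_four : Complex.exp (-4 * φ ξ η) = (Complex.exp (2 * φ ξ η) ^ 2)⁻¹ := by
    rw [← Complex.exp_nat_mul, ← Complex.exp_neg]
    ring_nf
  have hode := tanProfile_ode θ
  have hg := (tanProfile_pos θ).ne'
  rw [mixedDerivC, hφξη, hexp_neg_four, hexp, hab, Complex.real_smul]
  generalize tan θ = t at hode ⊢
  generalize tanProfile θ = g at hode hg ⊢
  have hodeC := congrArg Complex.ofReal hode
  push_cast at hodeC ⊢
  have hgC : (g : ℂ) ≠ 0 := Complex.ofReal_ne_zero.mpr hg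
  field_simp
  linear_combination 4 * hodeC

end TravelingWave

/-- With `Θ = (√3/2)(ρξ + η/ρ) - α`, on the set where `cos Θ ≠ 0` the function
`u = -(3/2)tan²Θ - 1/2` satisfies `u·u_{ξη} - u_ξ·u_η + u³ - 1 = 0`;
equivalently the complex-valued `φ = iπ/2 + (1/2)·ln[(3/2)tan²Θ + 1/2]`
satisfies the T2 Tzitzeica equation `2 φ_{ξη} = -(e^{2φ} - e^{-4φ})` there. -/
theorem stmt_13 (ρ α : ℝ) (hρ : ρ ≠ 0)
    (Θ : ℝ → ℝ → ℝ)
    (hΘ : ∀ ξ η : ℝ, Θ ξ η = (Real.sqrt 3 / 2) * (ρ * ξ + η / ρ) - α)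
    (u : ℝ → ℝ → ℝ)
    (hu : ∀ ξ η : ℝ, u ξ η = -(3 / 2) * Real.tan (Θ ξ η) ^ 2 - 1 / 2)
    (φ : ℝ → ℝ → ℂ)
    (hφ : ∀ ξ η : ℝ, φ ξ η =
      Complex.I * Real.pi / 2 +
        (1 / 2) * (Real.log ((3 / 2) * Real.tan (Θ ξ η) ^ 2 + 1 / 2) : ℂ)) :
    ∀ ξ η : ℝ, Real.cos (Θ ξ η) ≠ 0 →
      (u ξ η * mixedDeriv u ξ η - pdXi u ξ η * pdEta u ξ η + (u ξ η) ^ 3 - 1 = 0) ∧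
      (2 * mixedDerivC φ ξ η =
        -(Complex.exp (2 * φ ξ η) - Complex.exp (-4 * φ ξ η))) := by
  intro ξ η hcos
  have hab : (√3 / 2 * ρ) * (√3 / 2 / ρ) = 3 / 4 := by
    field_simp
    norm_num
  have hΘ' : ∀ x y, Θ x y = √3 / 2 * ρ * x + √3 / 2 / ρ * y + -α := fun x y => by
    rw [hΘ]
    ring
  rw [hΘ'] at hcos
  refine ⟨tzitzeica_u_of_eq_neg_tanProfile hab (fun x y => ?_) hcos,
    tzitzeica_phi_of_eq_log_tanProfile hab (fun x y => ?_) hcos⟩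
  · rw [hu, hΘ', tanProfile]
    ring
  · rw [hφ, hΘ', tanProfile]
end

section
/- Let ρ ≠ 0 and α be real numbers and define Θ(ξ,η) = (√3/2)(ρξ + η/ρ) − α. Then on the open set where cos Θ ≠ 0, the real-valued function ψ(ξ,η) = (1/2)·ln[(3/2)·tan²Θ + 1/2] satisfies the T4 Tzitzeica equation: 2 ∂²ψ/∂ξ∂η = e^{2ψ} + e^{−4ψ}. -/
open Real Filter Topology

lemma deriv_comp_mul_add (f : ℝ → ℝ) (b d y : ℝ) :
    deriv (fun y => f (b * y + d)) y = b * deriv f (b * y + d) := calc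
  _ = deriv (fun y => (fun z => f (z + d)) (b * y)) y := rfl
  _ = b * deriv f (b * y + d) := by
    rw [deriv_comp_mul_left b (fun z => f (z + d)), deriv_comp_add_const, smul_eq_mul]

lemma mixedDeriv_comp_affine (f : ℝ → ℝ) (a b d x y : ℝ) :
    mixedDeriv (fun x y => f (a * x + b * y + d)) x y =
      a * b * deriv (deriv f) (a * x + b * y + d) := by
  have inner (x : ℝ) : deriv (fun y => f (a * x + b * y + d)) y =
      b * deriv f (a * x + (b * y + d)) := by
    simp only [add_assoc, add_left_comm (a * x)]
    exact deriv_comp_mul_add f b _ y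
  simp only [mixedDeriv, inner]
  rw [deriv_const_mul_field, deriv_comp_mul_add (deriv f) a, add_assoc]
  ring

lemma hasDerivAt_tan_eq_one_add_tan_sq {θ : ℝ} (h : cos θ ≠ 0) :
    HasDerivAt tan (1 + tan θ ^ 2) θ := by
  convert hasDerivAt_tan h using 1
  rw [one_div, ← inv_one_add_tan_sq h, inv_inv]

noncomputable def tzitzeicaWave (θ : ℝ) : ℝ :=
  1 / 2 * log (3 / 2 * tan θ ^ 2 + 1 / 2)

noncomputable def tzitzeicaWaveSlope (θ : ℝ) : ℝ :=
  3 * tan θ * (1 + tan θ ^ 2) / (3 * tan θ ^ 2 + 1)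

lemma hasDerivAt_tzitzeicaWave {θ : ℝ} (h : cos θ ≠ 0) :
    HasDerivAt tzitzeicaWave (tzitzeicaWaveSlope θ) θ := by
  have hpos : 0 < 3 / 2 * tan θ ^ 2 + 1 / 2 := by positivity
  have := ((((hasDerivAt_tan_eq_one_add_tan_sq h).fun_pow 2).const_mul (3 / 2)).add_const (1 / 2)
    |>.log hpos.ne').const_mul (1 / 2)
  exact this.congr_deriv (by rw [tzitzeicaWaveSlope]; field_simp; ring)

lemma hasDerivAt_tzitzeicaWaveSlope {θ : ℝ} (h : cos θ ≠ 0) :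
    HasDerivAt tzitzeicaWaveSlope
      (3 * (3 * tan θ ^ 4 + 1) * (1 + tan θ ^ 2) / (3 * tan θ ^ 2 + 1) ^ 2) θ := by
  have ht := hasDerivAt_tan_eq_one_add_tan_sq h
  have := ((ht.const_mul 3).fun_mul ((ht.fun_pow 2).const_add 1)).fun_div
    ((ht.fun_pow 2).const_mul 3 |>.add_const 1) (by positivity)
  exact this.congr_deriv (by field_simp; ring)

lemma deriv_deriv_tzitzeicaWave {θ : ℝ} (h : cos θ ≠ 0) :
    deriv (deriv tzitzeicaWave) θ =
      3 * (3 * tan θ ^ 4 + 1) * (1 + tan θ ^ 2) / (3 * tan θ ^ 2 + 1) ^ 2 := by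
  have hnear : ∀ᶠ φ in 𝓝 θ, cos φ ≠ 0 := continuous_cos.continuousAt.eventually_ne h
  have hslope : deriv tzitzeicaWave =ᶠ[𝓝 θ] tzitzeicaWaveSlope :=
    hnear.mono fun φ hφ => (hasDerivAt_tzitzeicaWave hφ).deriv
  rw [hslope.deriv_eq, (hasDerivAt_tzitzeicaWaveSlope h).deriv]

lemma exp_two_mul_tzitzeicaWave (θ : ℝ) :
    exp (2 * tzitzeicaWave θ) = 3 / 2 * tan θ ^ 2 + 1 / 2 := by
  rw [tzitzeicaWave, ← mul_assoc, show (2 : ℝ) * (1 / 2) = 1 by norm_num, one_mul,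
    exp_log (by positivity)]

theorem tzitzeicaWave_ode {θ : ℝ} (h : cos θ ≠ 0) :
    3 / 2 * deriv (deriv tzitzeicaWave) θ =
      exp (2 * tzitzeicaWave θ) + exp (-4 * tzitzeicaWave θ) := by
  have hexp4 : exp (-4 * tzitzeicaWave θ) = (exp (2 * tzitzeicaWave θ) ^ 2)⁻¹ := by
    rw [← exp_nat_mul, ← exp_neg]; push_cast; ring_nf
  rw [hexp4, exp_two_mul_tzitzeicaWave, deriv_deriv_tzitzeicaWave h]
  field_simp
  ring

/-- With `Θ = (√3/2)(ρξ + η/ρ) - α`, on the set where `cos Θ ≠ 0` the function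
`ψ = (1/2)·ln[(3/2)tan²Θ + 1/2]` satisfies the T4 Tzitzeica equation
`2 ψ_{ξη} = e^{2ψ} + e^{-4ψ}`. -/
theorem stmt_14 (ρ α : ℝ) (hρ : ρ ≠ 0)
    (Θ : ℝ → ℝ → ℝ)
    (hΘ : ∀ ξ η : ℝ, Θ ξ η = (Real.sqrt 3 / 2) * (ρ * ξ + η / ρ) - α)
    (ψ : ℝ → ℝ → ℝ)
    (hψ : ∀ ξ η : ℝ, ψ ξ η =
      (1 / 2) * Real.log ((3 / 2) * Real.tan (Θ ξ η) ^ 2 + 1 / 2)) :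
    ∀ ξ η : ℝ, Real.cos (Θ ξ η) ≠ 0 →
      2 * mixedDeriv ψ ξ η = Real.exp (2 * ψ ξ η) + Real.exp (-4 * ψ ξ η) := by
  intro ξ η hcos
  set c := √3 / 2
  have hΘ_affine (x y : ℝ) : Θ x y = c * ρ * x + c / ρ * y + -α := by
    rw [hΘ]; field_simp; ring
  have hψ_wave : ψ = fun x y => tzitzeicaWave (c * ρ * x + c / ρ * y + -α) := by
    ext x y; rw [hψ, hΘ_affine, tzitzeicaWave]
  have hc : c * ρ * (c / ρ) = 3 / 4 := by
    field_simp; simp [c, div_pow]; norm_num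
  rw [hψ_wave, mixedDeriv_comp_affine, hc]
  beta_reduce
  rw [← hΘ_affine, ← tzitzeicaWave_ode hcos]
  ring
end

section
/- Let ρ ≠ 0 and α be real numbers and define Θ(ξ,η) = (√3/2)(ρξ + η/ρ) − α. Then on the open set where sin Θ ≠ 0, the real-valued function ψ(ξ,η) = (1/2)·ln[(3/2)·cot²Θ + 1/2] satisfies the T4 Tzitzeica equation: 2 ∂²ψ/∂ξ∂η = e^{2ψ} + e^{−4ψ}. This solution is singular and blows up along the lines where sin Θ = 0. -/
/-!
A traveling wave `ψ = f(aξ + bη + c)` has `ψ_{ξη} = ab f''`, and here `ab = 3/4`, so T4 reduces to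
the ODE `(3/2) f'' = e^{2f} + e^{-4f}` for `f(t) = g(cot t)`, `g(u) = (1/2) ln((3u² + 1)/2)`.
Since `cot' = -(1 + cot²)`, both `f'` and `f''` are rational functions of `u = cot t`, and the ODE
becomes the polynomial identity `(3u² + 1)³ + 8 = 9 (1 + u²)(3u⁴ + 1)`.
-/

open Real Filter Topology

theorem mixedDeriv_comp_affine_s15 {f f' : ℝ → ℝ} {f'' a b c ξ η : ℝ}
    (hf : ∀ᶠ t in 𝓝 (a * ξ + b * η + c), HasDerivAt f (f' t) t)
    (hf' : HasDerivAt f' f'' (a * ξ + b * η + c)) :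
    mixedDeriv (fun x y => f (a * x + b * y + c)) ξ η = a * b * f'' := by
  have hlineη : ∀ x, HasDerivAt (fun y => a * x + b * y + c) b η := fun x => by
    simpa using (((hasDerivAt_id η).const_mul b).const_add (a * x)).add_const c
  have hlineξ : HasDerivAt (fun x => a * x + b * η + c) a ξ := by
    simpa using (((hasDerivAt_id ξ).const_mul a).add_const (b * η)).add_const c
  have hinner : (fun x => deriv (fun y => f (a * x + b * y + c)) η) =ᶠ[𝓝 ξ]
      fun x => f' (a * x + b * η + c) * b := by
    have hcont : Continuous fun x => a * x + b * η + c := by fun_prop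
    filter_upwards [hcont.continuousAt.tendsto.eventually hf] with x hx
    exact (hx.comp η (hlineη x)).deriv
  rw [mixedDeriv, hinner.deriv_eq]
  exact ((hf'.comp ξ hlineξ).mul_const b).deriv.trans (by ring)

namespace Real

theorem hasDerivAt_cot {t : ℝ} (h : sin t ≠ 0) : HasDerivAt cot (-(1 + cot t ^ 2)) t := by
  have hcot : cot = fun x => cos x / sin x := funext cot_eq_cos_div_sin
  rw [hcot]
  refine ((hasDerivAt_cos t).div (hasDerivAt_sin t) h).congr_deriv ?_
  field_simp
  ring

end Real

noncomputable def cotProfile (u : ℝ) : ℝ := 1 / 2 * log (3 / 2 * u ^ 2 + 1 / 2)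

noncomputable def cotProfileDeriv (u : ℝ) : ℝ := -3 * u * (1 + u ^ 2) / (3 * u ^ 2 + 1)

noncomputable def cotProfileDeriv2 (u : ℝ) : ℝ :=
  3 * (1 + u ^ 2) * (3 * u ^ 4 + 1) / (3 * u ^ 2 + 1) ^ 2

theorem hasDerivAt_cotProfile_comp_cot {t : ℝ} (h : sin t ≠ 0) :
    HasDerivAt (fun t => cotProfile (cot t)) (cotProfileDeriv (cot t)) t := by
  set u := cot t
  have hpos : 0 < 3 / 2 * u ^ 2 + 1 / 2 := by positivity
  have hq : HasDerivAt (fun u => 3 / 2 * u ^ 2 + 1 / 2) (3 * u) u := by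
    refine (((hasDerivAt_pow 2 u).const_mul (3 / 2 : ℝ)).add_const (1 / 2 : ℝ)).congr_deriv ?_
    ring
  have hg : HasDerivAt cotProfile (1 / 2 * (3 * u / (3 / 2 * u ^ 2 + 1 / 2))) u :=
    (hq.log hpos.ne').const_mul _
  refine (hg.comp t (hasDerivAt_cot h)).congr_deriv ?_
  rw [cotProfileDeriv]
  field_simp
  ring

theorem hasDerivAt_cotProfileDeriv_comp_cot {t : ℝ} (h : sin t ≠ 0) :
    HasDerivAt (fun t => cotProfileDeriv (cot t)) (cotProfileDeriv2 (cot t)) t := by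
  set u := cot t
  have hpos : 0 < 3 * u ^ 2 + 1 := by positivity
  have hnum : HasDerivAt (fun u => -3 * u * (1 + u ^ 2)) (-3 * (1 + 3 * u ^ 2)) u := by
    have := ((hasDerivAt_id u).const_mul (-3 : ℝ)).mul ((hasDerivAt_pow 2 u).const_add (1 : ℝ))
    refine this.congr_deriv ?_
    simp only [id, mul_one, Nat.cast_ofNat]
    ring
  have hden : HasDerivAt (fun u => 3 * u ^ 2 + 1) (6 * u) u := by
    refine (((hasDerivAt_pow 2 u).const_mul (3 : ℝ)).add_const (1 : ℝ)).congr_deriv ?_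
    ring
  refine ((hnum.div hden hpos.ne').comp t (hasDerivAt_cot h)).congr_deriv ?_
  rw [cotProfileDeriv2]
  field_simp
  ring

theorem cotProfile_ode (u : ℝ) :
    3 / 2 * cotProfileDeriv2 u = exp (2 * cotProfile u) + exp (-4 * cotProfile u) := by
  have hpos : 0 < 3 / 2 * u ^ 2 + 1 / 2 := by positivity
  have hexp : ∀ k : ℝ, exp (k * cotProfile u) = (3 / 2 * u ^ 2 + 1 / 2) ^ (k / 2) := fun k => by
    rw [cotProfile, rpow_def_of_pos hpos]
    ring_nf
  rw [hexp, hexp, show (2 : ℝ) / 2 = (1 : ℕ) by norm_num, show (-4 : ℝ) / 2 = -(2 : ℕ) by norm_num,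
    rpow_neg hpos.le, rpow_natCast, rpow_natCast, cotProfileDeriv2]
  field_simp
  ring

/-- With `Θ = (√3/2)(ρξ + η/ρ) - α`, on the set where `sin Θ ≠ 0` the function
`ψ = (1/2)·ln[(3/2)cot²Θ + 1/2]` satisfies the T4 Tzitzeica equation
`2 ψ_{ξη} = e^{2ψ} + e^{-4ψ}`. -/
theorem stmt_15 (ρ α : ℝ) (hρ : ρ ≠ 0)
    (Θ : ℝ → ℝ → ℝ)
    (hΘ : ∀ ξ η : ℝ, Θ ξ η = (Real.sqrt 3 / 2) * (ρ * ξ + η / ρ) - α)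
    (ψ : ℝ → ℝ → ℝ)
    (hψ : ∀ ξ η : ℝ, ψ ξ η =
      (1 / 2) * Real.log ((3 / 2) * Real.cot (Θ ξ η) ^ 2 + 1 / 2)) :
    ∀ ξ η : ℝ, Real.sin (Θ ξ η) ≠ 0 →
      2 * mixedDeriv ψ ξ η = Real.exp (2 * ψ ξ η) + Real.exp (-4 * ψ ξ η) := by
  intro ξ η hsin
  have hab : √3 / 2 * ρ * (√3 / 2 / ρ) = 3 / 4 := by
    field_simp
    rw [sq_sqrt (by norm_num)]
    ring
  set a := √3 / 2 * ρ
  set b := √3 / 2 / ρ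
  have hΘ' : ∀ x y, Θ x y = a * x + b * y + -α := fun x y => by rw [hΘ]; ring
  have hψ' : ψ = fun x y => cotProfile (cot (a * x + b * y + -α)) := by
    ext x y
    rw [hψ, hΘ', cotProfile]
  rw [hΘ'] at hsin
  have hmixed : mixedDeriv ψ ξ η = a * b * cotProfileDeriv2 (cot (a * ξ + b * η + -α)) := by
    rw [hψ']
    exact mixedDeriv_comp_affine_s15
      (continuous_sin.continuousAt.eventually_ne hsin |>.mono fun t ht =>
        hasDerivAt_cotProfile_comp_cot ht)
      (hasDerivAt_cotProfileDeriv_comp_cot hsin)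
  rw [hmixed, hab, hψ']
  linear_combination cotProfile_ode (cot (a * ξ + b * η + -α))
end

section
/- Let f, g : ℝ² → ℝ be twice continuously differentiable functions that are positive on an open set U and satisfy there the Hirota bilinear system (∂²g/∂ξ∂η)·g − (∂g/∂ξ)(∂g/∂η) − f² + g² = 0 and (∂²f/∂ξ∂η)·f − (∂f/∂ξ)(∂f/∂η) − fg + f² = 0. Then the function φ = (1/2)·ln(g/f) satisfies the T2 Tzitzeica equation 2 ∂²φ/∂ξ∂η = −(e^{2φ} − e^{−4φ}) on U. -/
/-!
Here `e^{2φ} = g/f`, `e^{-4φ} = f²/g²` and `φ_{ξη} = ½((log g)_{ξη} - (log f)_{ξη})`, where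
`(log h)_{ξη} = (h_{ξη} h - h_ξ h_η) / h²`. The two bilinear equations say precisely that these
log-derivatives are `f²/g² - 1` for `h = g` and `g/f - 1` for `h = f`, so `2φ_{ξη} = f²/g² - g/f`.
-/

open Filter Topology Real

section PartialDerivatives

variable {u : ℝ → ℝ → ℝ} {x y : ℝ}

theorem hasDerivAt_pdXi (hu : DifferentiableAt ℝ (Function.uncurry u) (x, y)) :
    HasDerivAt (fun x => u x y) (pdXi u x y) x :=
  (hu.comp (f := fun x => (x, y)) x
    (differentiableAt_id.prodMk (differentiableAt_const y))).hasDerivAt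

theorem hasDerivAt_pdEta (hu : DifferentiableAt ℝ (Function.uncurry u) (x, y)) :
    HasDerivAt (fun y => u x y) (pdEta u x y) y :=
  (hu.comp y ((differentiableAt_const x).prodMk differentiableAt_id)).hasDerivAt

theorem pdEta_eq_fderiv_apply (hu : DifferentiableAt ℝ (Function.uncurry u) (x, y)) :
    pdEta u x y = fderiv ℝ (Function.uncurry u) (x, y) (0, 1) := by
  have h := (hu.hasFDerivAt.comp y ((hasFDerivAt_const x y).prodMk (hasFDerivAt_id y))).hasDerivAt
  simp only [ContinuousLinearMap.coe_comp, Function.comp_apply,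
    ContinuousLinearMap.prod_apply, zero_apply, ContinuousLinearMap.id_apply] at h
  exact h.deriv

theorem hasDerivAt_pdEta_mixedDeriv (hu : ContDiff ℝ 2 (Function.uncurry u)) :
    HasDerivAt (fun x => pdEta u x y) (mixedDeriv u x y) x := by
  have hdiff : Differentiable ℝ (Function.uncurry u) := hu.differentiable (by norm_num)
  have hC1 : ContDiff ℝ 1 fun x => fderiv ℝ (Function.uncurry u) (x, y) (0, 1) :=
    ((hu.fderiv_right (by norm_num)).comp (contDiff_id.prodMk contDiff_const)).clm_apply
      contDiff_const
  have hpd : (fun x => pdEta u x y) = fun x => fderiv ℝ (Function.uncurry u) (x, y) (0, 1) :=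
    funext fun x => pdEta_eq_fderiv_apply (hdiff (x, y))
  have hdiffpd : DifferentiableAt ℝ (fun x => pdEta u x y) x := by
    rw [hpd]
    exact hC1.differentiable (by norm_num) x
  exact hdiffpd.hasDerivAt

end PartialDerivatives

section MixedDerivative

variable {u : ℝ → ℝ → ℝ} {a b : ℝ}

theorem mixedDeriv_const_mul (c : ℝ) :
    mixedDeriv (fun x y => c * u x y) a b = c * mixedDeriv u a b := by
  simp only [mixedDeriv, deriv_const_mul_field']

theorem mixedDeriv_eq_of_hasDerivAt {D : ℝ → ℝ} {L : ℝ}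
    (hD : ∀ᶠ x in 𝓝 a, HasDerivAt (fun y => u x y) (D x) b) (hL : HasDerivAt D L a) :
    mixedDeriv u a b = L := by
  have hEq : (fun x => deriv (fun y => u x y) b) =ᶠ[𝓝 a] D := hD.mono fun _ h => h.deriv
  exact hEq.deriv_eq.trans hL.deriv

theorem mixedDeriv_log_div {f g : ℝ → ℝ → ℝ} (hf : ContDiff ℝ 2 (Function.uncurry f))
    (hg : ContDiff ℝ 2 (Function.uncurry g)) (hfa : f a b ≠ 0) (hga : g a b ≠ 0) :
    mixedDeriv (fun x y => log (g x y / f x y)) a b =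
      (mixedDeriv g a b * g a b - pdXi g a b * pdEta g a b) / g a b ^ 2 -
        (mixedDeriv f a b * f a b - pdXi f a b * pdEta f a b) / f a b ^ 2 := by
  have hf' : Differentiable ℝ (Function.uncurry f) := hf.differentiable (by norm_num)
  have hg' : Differentiable ℝ (Function.uncurry g) := hg.differentiable (by norm_num)
  have hcont : Continuous fun x : ℝ => ((x, b) : ℝ × ℝ) := by fun_prop
  have hne : ∀ᶠ x in 𝓝 a, f x b ≠ 0 ∧ g x b ≠ 0 :=
    ((hf'.continuous.comp hcont).continuousAt.eventually_ne hfa).and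
      ((hg'.continuous.comp hcont).continuousAt.eventually_ne hga)
  refine mixedDeriv_eq_of_hasDerivAt (D := fun x => pdEta g x b / g x b - pdEta f x b / f x b)
    (hne.mono fun x ⟨hfx, hgx⟩ => ?_) ?_
  · refine (((hasDerivAt_pdEta (hg' _)).div (hasDerivAt_pdEta (hf' _)) hfx).log
      (div_ne_zero hgx hfx)).congr_deriv ?_
    simp only [Pi.div_apply]
    field_simp
  · refine (((hasDerivAt_pdEta_mixedDeriv hg).div (hasDerivAt_pdXi (hg' _)) hga).sub
      ((hasDerivAt_pdEta_mixedDeriv hf).div (hasDerivAt_pdXi (hf' _)) hfa)).congr_deriv ?_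
    ring

end MixedDerivative

theorem stmt_18_general (U : Set (ℝ × ℝ)) (f g : ℝ → ℝ → ℝ)
    (hf : ContDiff ℝ 2 (Function.uncurry f))
    (hg : ContDiff ℝ 2 (Function.uncurry g))
    (hfpos : ∀ p ∈ U, 0 < f p.1 p.2)
    (hgpos : ∀ p ∈ U, 0 < g p.1 p.2)
    (hbil₁ : ∀ p ∈ U,
      mixedDeriv g p.1 p.2 * g p.1 p.2 - pdXi g p.1 p.2 * pdEta g p.1 p.2 -
        (f p.1 p.2) ^ 2 + (g p.1 p.2) ^ 2 = 0)
    (hbil₂ : ∀ p ∈ U,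
      mixedDeriv f p.1 p.2 * f p.1 p.2 - pdXi f p.1 p.2 * pdEta f p.1 p.2 -
        f p.1 p.2 * g p.1 p.2 + (f p.1 p.2) ^ 2 = 0)
    (φ : ℝ → ℝ → ℝ)
    (hφ : ∀ ξ η : ℝ, φ ξ η = (1 / 2) * Real.log (g ξ η / f ξ η)) :
    ∀ p ∈ U,
      2 * mixedDeriv φ p.1 p.2 =
        -(Real.exp (2 * φ p.1 p.2) - Real.exp (-4 * φ p.1 p.2)) := by
  rintro ⟨a, b⟩ hp
  have hfa : 0 < f a b := hfpos (a, b) hp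
  have hga : 0 < g a b := hgpos (a, b) hp
  have hmixed : mixedDeriv φ a b = 1 / 2 *
      ((mixedDeriv g a b * g a b - pdXi g a b * pdEta g a b) / g a b ^ 2 -
        (mixedDeriv f a b * f a b - pdXi f a b * pdEta f a b) / f a b ^ 2) := by
    rw [show φ = fun x y => 1 / 2 * log (g x y / f x y) from funext fun x => funext (hφ x),
      mixedDeriv_const_mul, mixedDeriv_log_div hf hg hfa.ne' hga.ne']
  have hexp : exp (2 * φ a b) = g a b / f a b := by
    rw [hφ, ← mul_assoc, show (2 : ℝ) * (1 / 2) = 1 by norm_num, one_mul,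
      exp_log (div_pos hga hfa)]
  have hexp' : exp (-4 * φ a b) = (exp (2 * φ a b))⁻¹ ^ 2 := by
    rw [← exp_neg, ← exp_nat_mul]
    ring_nf
  have hg_eq : mixedDeriv g a b * g a b - pdXi g a b * pdEta g a b = f a b ^ 2 - g a b ^ 2 := by
    linear_combination hbil₁ (a, b) hp
  have hf_eq : mixedDeriv f a b * f a b - pdXi f a b * pdEta f a b = f a b * g a b - f a b ^ 2 := by
    linear_combination hbil₂ (a, b) hp
  dsimp only
  rw [hexp', hexp, hmixed, hg_eq, hf_eq]
  field_simp
  ring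

/-- If `f, g` are C², positive on an open set `U` and satisfy the Hirota
bilinear system `g_{ξη}g - g_ξ g_η - f² + g² = 0`,
`f_{ξη}f - f_ξ f_η - fg + f² = 0` on `U`, then `φ = (1/2)·ln(g/f)` satisfies
the T2 Tzitzeica equation `2 φ_{ξη} = -(e^{2φ} - e^{-4φ})` on `U`. -/
theorem stmt_18 (U : Set (ℝ × ℝ)) (hU : IsOpen U) (f g : ℝ → ℝ → ℝ)
    (hf : ContDiff ℝ 2 (Function.uncurry f))
    (hg : ContDiff ℝ 2 (Function.uncurry g))
    (hfpos : ∀ p ∈ U, 0 < f p.1 p.2)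
    (hgpos : ∀ p ∈ U, 0 < g p.1 p.2)
    (hbil₁ : ∀ p ∈ U,
      mixedDeriv g p.1 p.2 * g p.1 p.2 - pdXi g p.1 p.2 * pdEta g p.1 p.2 -
        (f p.1 p.2) ^ 2 + (g p.1 p.2) ^ 2 = 0)
    (hbil₂ : ∀ p ∈ U,
      mixedDeriv f p.1 p.2 * f p.1 p.2 - pdXi f p.1 p.2 * pdEta f p.1 p.2 -
        f p.1 p.2 * g p.1 p.2 + (f p.1 p.2) ^ 2 = 0)
    (φ : ℝ → ℝ → ℝ)
    (hφ : ∀ ξ η : ℝ, φ ξ η = (1 / 2) * Real.log (g ξ η / f ξ η)) :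
    ∀ p ∈ U,
      2 * mixedDeriv φ p.1 p.2 =
        -(Real.exp (2 * φ p.1 p.2) - Real.exp (-4 * φ p.1 p.2)) :=
  stmt_18_general U f g hf hg hfpos hgpos hbil₁ hbil₂ φ hφ
end

section
/- Let k ≠ 0 and A be real numbers and set z(ξ,η) = e^{kξ − (3/k)η}. Then the functions g(ξ,η) = 1 − 2A·z + (A²/4)·z² and f(ξ,η) = 1 + A·z + (A²/4)·z² satisfy the Hirota bilinear system (∂²g/∂ξ∂η)·g − (∂g/∂ξ)(∂g/∂η) − f² + g² = 0 and (∂²f/∂ξ∂η)·f − (∂f/∂ξ)(∂f/∂η) − fg + f² = 0 on all of ℝ². Consequently, wherever g > 0 and f > 0, the function φ = (1/2)·ln(g/f) is a one-soliton solution of the T2 Tzitzeica equation 2 ∂²φ/∂ξ∂η = −(e^{2φ} − e^{−4φ}), with dispersion relation ω = 3/k for z = e^{kξ − ωη}; for A = 2 it coincides with the quasi-regular soliton φ = (1/2)·ln[(3/2)·tanh²((kξ − 3η/k)/2) − 1/2]. -/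
/-!
Every function in sight depends on `(ξ, η)` only through the phase `z = e^{kξ - ωη}`, for which
`∂_ξ = k z d/dz` and `∂_η = -ω z d/dz`, so `∂_ξ ∂_η = -kω (z d/dz)²`. With `kω = 3` the bilinear
system becomes a polynomial identity in `z`. The T2 equation follows from the bilinear system
because `2 φ_ξη = (log g)_ξη - (log f)_ξη = D(g)/g² - D(f)/f²` with `D(g) = g g_ξη - g_ξ g_η`.
For `A = 2`, `f = (1 + z)²` and `tanh (θ/2) = (e^θ - 1)/(e^θ + 1)` give the `tanh` form.
-/

open Real Filter Topology

noncomputable def expPhase (k ω ξ η : ℝ) : ℝ := exp (k * ξ - ω * η)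

def quadTau (a b w : ℝ) : ℝ := 1 + a * w + b * w ^ 2

/-- `hirotaDD g = ½ D_ξ D_η (g · g)` in Hirota's notation. -/
noncomputable def hirotaDD (g : ℝ → ℝ → ℝ) (ξ η : ℝ) : ℝ :=
  mixedDeriv g ξ η * g ξ η - pdXi g ξ η * pdEta g ξ η

lemma hasDerivAt_quadTau (a b w : ℝ) : HasDerivAt (quadTau a b) (a + 2 * b * w) w := by
  have h := (((hasDerivAt_id w).const_mul a).const_add 1).add ((hasDerivAt_pow 2 w).const_mul b)
  exact h.congr_deriv (by simp only [Nat.cast_ofNat, Nat.add_one_sub_one, pow_one]; ring)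

lemma hasDerivAt_quadTau_deriv (a b w : ℝ) : HasDerivAt (fun w => a + 2 * b * w) (2 * b) w := by
  simpa using ((hasDerivAt_id w).const_mul (2 * b)).const_add a

section expPhase

variable {k ω ξ η : ℝ}

lemma hasDerivAt_expPhase_fst :
    HasDerivAt (fun x => expPhase k ω x η) (k * expPhase k ω ξ η) ξ := by
  simpa [expPhase, mul_comm] using (((hasDerivAt_id ξ).const_mul k).sub_const (ω * η)).exp

lemma hasDerivAt_expPhase_snd :
    HasDerivAt (fun y => expPhase k ω ξ y) (-ω * expPhase k ω ξ η) η := by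
  simpa [expPhase, mul_comm] using (((hasDerivAt_id η).const_mul ω).const_sub (k * ξ)).exp

variable {Φ Φ' : ℝ → ℝ} {Φ'z Φ'' : ℝ}

lemma pdXi_comp_expPhase (hΦ : HasDerivAt Φ Φ'z (expPhase k ω ξ η)) :
    pdXi (fun x y => Φ (expPhase k ω x y)) ξ η = k * expPhase k ω ξ η * Φ'z :=
  (hΦ.comp ξ hasDerivAt_expPhase_fst).deriv.trans (by ring)

lemma pdEta_comp_expPhase (hΦ : HasDerivAt Φ Φ'z (expPhase k ω ξ η)) :
    pdEta (fun x y => Φ (expPhase k ω x y)) ξ η = -ω * expPhase k ω ξ η * Φ'z :=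
  (hΦ.comp η hasDerivAt_expPhase_snd).deriv.trans (by ring)

lemma mixedDeriv_comp_expPhase (hΦ : ∀ᶠ w in 𝓝 (expPhase k ω ξ η), HasDerivAt Φ (Φ' w) w)
    (hΦ' : HasDerivAt Φ' Φ'' (expPhase k ω ξ η)) :
    mixedDeriv (fun x y => Φ (expPhase k ω x y)) ξ η =
      -(k * ω) * (expPhase k ω ξ η * Φ' (expPhase k ω ξ η) + expPhase k ω ξ η ^ 2 * Φ'') := by
  have hinner : (fun x => pdEta (fun x y => Φ (expPhase k ω x y)) x η) =ᶠ[𝓝 ξ]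
      fun x => -ω * expPhase k ω x η * Φ' (expPhase k ω x η) := by
    filter_upwards [hasDerivAt_expPhase_fst.continuousAt.eventually hΦ] with x hx
    exact pdEta_comp_expPhase hx
  have hd := ((hasDerivAt_expPhase_fst (k := k) (ω := ω) (η := η)).const_mul (-ω)).mul
    (hΦ'.comp ξ hasDerivAt_expPhase_fst)
  exact (hd.congr_of_eventuallyEq hinner).deriv.trans (by simp only [Function.comp_apply]; ring)

lemma hirotaDD_comp_expPhase (hΦ : ∀ᶠ w in 𝓝 (expPhase k ω ξ η), HasDerivAt Φ (Φ' w) w)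
    (hΦ' : HasDerivAt Φ' Φ'' (expPhase k ω ξ η)) :
    hirotaDD (fun x y => Φ (expPhase k ω x y)) ξ η =
      -(k * ω) * (expPhase k ω ξ η * Φ' (expPhase k ω ξ η) * Φ (expPhase k ω ξ η) +
        expPhase k ω ξ η ^ 2 * (Φ'' * Φ (expPhase k ω ξ η) - Φ' (expPhase k ω ξ η) ^ 2)) := by
  rw [hirotaDD, mixedDeriv_comp_expPhase hΦ hΦ', pdXi_comp_expPhase hΦ.self_of_nhds,
    pdEta_comp_expPhase hΦ.self_of_nhds]
  ring

lemma hirotaDD_quadTau_comp_expPhase (a b : ℝ) :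
    hirotaDD (fun x y => quadTau a b (expPhase k ω x y)) ξ η =
      -(k * ω) * expPhase k ω ξ η *
        (a + 4 * b * expPhase k ω ξ η + a * b * expPhase k ω ξ η ^ 2) := by
  rw [hirotaDD_comp_expPhase (Eventually.of_forall (hasDerivAt_quadTau a b))
    (hasDerivAt_quadTau_deriv a b _), quadTau]
  ring

lemma two_mixedDeriv_half_log_div_comp_expPhase {G F G' F' : ℝ → ℝ} {G'' F'' : ℝ}
    (hG : ∀ᶠ w in 𝓝 (expPhase k ω ξ η), HasDerivAt G (G' w) w)
    (hF : ∀ᶠ w in 𝓝 (expPhase k ω ξ η), HasDerivAt F (F' w) w)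
    (hG' : HasDerivAt G' G'' (expPhase k ω ξ η)) (hF' : HasDerivAt F' F'' (expPhase k ω ξ η))
    (hG0 : G (expPhase k ω ξ η) ≠ 0) (hF0 : F (expPhase k ω ξ η) ≠ 0) :
    2 * mixedDeriv (fun x y => 1 / 2 * log (G (expPhase k ω x y) / F (expPhase k ω x y))) ξ η =
      hirotaDD (fun x y => G (expPhase k ω x y)) ξ η / G (expPhase k ω ξ η) ^ 2 -
        hirotaDD (fun x y => F (expPhase k ω x y)) ξ η / F (expPhase k ω ξ η) ^ 2 := by
  have hG0' := hG.self_of_nhds.continuousAt.eventually_ne hG0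
  have hF0' := hF.self_of_nhds.continuousAt.eventually_ne hF0
  have hΨ : ∀ᶠ w in 𝓝 (expPhase k ω ξ η), HasDerivAt (fun w => 1 / 2 * log (G w / F w))
      (1 / 2 * (G' w / G w - F' w / F w)) w := by
    filter_upwards [hG, hF, hG0', hF0'] with w hGw hFw hGw0 hFw0
    exact (((hGw.div hFw hFw0).log (div_ne_zero hGw0 hFw0)).const_mul (1 / 2)).congr_deriv
      (by simp only [Pi.div_apply]; field_simp)
  have hΨ' := ((hG'.div hG.self_of_nhds hG0).sub (hF'.div hF.self_of_nhds hF0)).const_mul (1 / 2)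
  rw [mixedDeriv_comp_expPhase hΨ hΨ', hirotaDD_comp_expPhase hG hG',
    hirotaDD_comp_expPhase hF hF']
  field_simp
  ring

end expPhase

lemma tzitzeica_of_bilinear {g f Bg Bf : ℝ} (hg : 0 < g) (hf : 0 < f)
    (hBg : Bg - f ^ 2 + g ^ 2 = 0) (hBf : Bf - f * g + f ^ 2 = 0) :
    Bg / g ^ 2 - Bf / f ^ 2 =
      -(exp (2 * (1 / 2 * log (g / f))) - exp (-4 * (1 / 2 * log (g / f)))) := by
  have hexp : exp (log (g / f)) = g / f := exp_log (div_pos hg hf)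
  rw [show -4 * (1 / 2 * log (g / f)) = -log (g / f) + -log (g / f) by ring,
    show 2 * (1 / 2 * log (g / f)) = log (g / f) by ring, exp_add, exp_neg, hexp]
  obtain rfl : Bg = f ^ 2 - g ^ 2 := by linarith
  obtain rfl : Bf = f * g - f ^ 2 := by linarith
  field_simp
  ring

lemma three_halves_tanh_half_sq_sub_half (θ : ℝ) :
    3 / 2 * tanh (θ / 2) ^ 2 - 1 / 2 = quadTau (-4) 1 (exp θ) / quadTau 2 1 (exp θ) := by
  have hsq : exp θ = exp (θ / 2) ^ 2 := by rw [← exp_nat_mul]; ring_nf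
  have hs := exp_pos (θ / 2)
  have hden : quadTau 2 1 (exp (θ / 2) ^ 2) ≠ 0 := by unfold quadTau; positivity
  rw [tanh_eq, exp_neg, hsq]
  unfold quadTau at hden ⊢
  field_simp
  ring

/-- With `z = e^{kξ - (3/k)η}` (dispersion relation `ω = 3/k`), the tau functions
`g = 1 - 2Az + (A²/4)z²` and `f = 1 + Az + (A²/4)z²` satisfy the Hirota bilinear
system of the T2 Tzitzeica equation on all of ℝ²; consequently wherever
`g > 0` and `f > 0`, `φ = (1/2)·ln(g/f)` satisfies T2:
`2 φ_{ξη} = -(e^{2φ} - e^{-4φ})`; and for `A = 2` this `φ` coincides with the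
quasi-regular soliton `(1/2)·ln[(3/2)·tanh²((kξ - 3η/k)/2) - 1/2]`. -/
theorem stmt_19 (k A : ℝ) (hk : k ≠ 0)
    (z g f : ℝ → ℝ → ℝ)
    (hz : ∀ ξ η : ℝ, z ξ η = Real.exp (k * ξ - (3 / k) * η))
    (hg : ∀ ξ η : ℝ, g ξ η = 1 - 2 * A * z ξ η + (A ^ 2 / 4) * (z ξ η) ^ 2)
    (hf : ∀ ξ η : ℝ, f ξ η = 1 + A * z ξ η + (A ^ 2 / 4) * (z ξ η) ^ 2)
    (φ : ℝ → ℝ → ℝ)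
    (hφ : ∀ ξ η : ℝ, φ ξ η = (1 / 2) * Real.log (g ξ η / f ξ η)) :
    (∀ ξ η : ℝ,
      mixedDeriv g ξ η * g ξ η - pdXi g ξ η * pdEta g ξ η -
        (f ξ η) ^ 2 + (g ξ η) ^ 2 = 0 ∧
      mixedDeriv f ξ η * f ξ η - pdXi f ξ η * pdEta f ξ η -
        f ξ η * g ξ η + (f ξ η) ^ 2 = 0) ∧
    (∀ ξ η : ℝ, 0 < g ξ η → 0 < f ξ η →
      2 * mixedDeriv φ ξ η = -(Real.exp (2 * φ ξ η) - Real.exp (-4 * φ ξ η))) ∧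
    (A = 2 → ∀ ξ η : ℝ,
      φ ξ η = (1 / 2) *
        Real.log ((3 / 2) * Real.tanh ((k * ξ - 3 * η / k) / 2) ^ 2 - 1 / 2)) := by
  obtain rfl : z = expPhase k (3 / k) := funext₂ hz
  have hgz (ξ η : ℝ) : g ξ η = quadTau (-2 * A) (A ^ 2 / 4) (expPhase k (3 / k) ξ η) := by
    rw [hg, quadTau]; ring
  have hfz (ξ η : ℝ) : f ξ η = quadTau A (A ^ 2 / 4) (expPhase k (3 / k) ξ η) := by
    rw [hf, quadTau]
  have hg' := funext₂ hgz
  have hf' := funext₂ hfz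
  have hk3 : k * (3 / k) = 3 := mul_div_cancel₀ 3 hk
  have hbil_g (ξ η : ℝ) : hirotaDD g ξ η - f ξ η ^ 2 + g ξ η ^ 2 = 0 := by
    rw [hg', hf', hirotaDD_quadTau_comp_expPhase, hk3]
    simp only [quadTau]
    ring
  have hbil_f (ξ η : ℝ) : hirotaDD f ξ η - f ξ η * g ξ η + f ξ η ^ 2 = 0 := by
    rw [hg', hf', hirotaDD_quadTau_comp_expPhase, hk3]
    simp only [quadTau]
    ring
  refine ⟨fun ξ η => ⟨hbil_g ξ η, hbil_f ξ η⟩, fun ξ η hg0 hf0 => ?_, fun hA ξ η => ?_⟩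
  · calc 2 * mixedDeriv φ ξ η = hirotaDD g ξ η / g ξ η ^ 2 - hirotaDD f ξ η / f ξ η ^ 2 := by
          rw [funext₂ hφ, hg', hf']
          exact two_mixedDeriv_half_log_div_comp_expPhase
            (.of_forall (hasDerivAt_quadTau _ _)) (.of_forall (hasDerivAt_quadTau _ _))
            (hasDerivAt_quadTau_deriv _ _ _) (hasDerivAt_quadTau_deriv _ _ _)
            (hgz ξ η ▸ hg0.ne') (hfz ξ η ▸ hf0.ne')
      _ = _ := by rw [hφ]; exact tzitzeica_of_bilinear hg0 hf0 (hbil_g ξ η) (hbil_f ξ η)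
  · rw [hφ, hg', hf', hA, show k * ξ - 3 * η / k = k * ξ - 3 / k * η by ring,
      three_halves_tanh_half_sq_sub_half]
    norm_num [expPhase]
end
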